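/- arXiv:math/0609769 — 9 statements merged into one kernel-verified Lean document; each statement's English description precedes it below -/
import Mathlib

section
/- Let Γ be an abelian group and Fr : Γ → Γ a group automorphism such that for every integer k ≥ 1 the endomorphism L_k := Fr^k − id of Γ is surjective. For n ≥ 1 set Γ_n := ker(L_n). Let m, n ≥ 1 with m ∣ n, and define tr^n_m : Γ_n → Γ by tr^n_m(γ) = Σ_{i=0}^{n/m − 1} Fr^{im}(γ). Then: (a) tr^n_m maps Γ_n into Γ_m and is a surjective group homomorphism Γ_n → Γ_m whose kernel is exactly L_m(Γ_n); (b) consequently, precomposition with tr^n_m defines a bijection from the set of group homomorphisms Γ_m → ℂˣ onto the set of group homomorphisms χ : Γ_n → ℂˣ satisfying χ ∘ Fr^m = χ (note Fr^m restricts to an automorphism of Γ_n). -/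
variable {Γ : Type*} [AddCommGroup Γ]

/-- The subgroup of elements fixed by the `k`-th power of the automorphism `Fr`
(i.e. the kernel of `L_k = Fr^k - id`). -/
def frobFix (Fr : AddAut Γ) (k : ℕ) : AddSubgroup Γ where
  carrier := {γ : Γ | (k • Fr) γ = γ}
  zero_mem' := by simp
  add_mem' := by
    intro a b ha hb
    simp only [Set.mem_setOf_eq] at *
    rw [map_add, ha, hb]
  neg_mem' := by
    intro a ha
    simp only [Set.mem_setOf_eq] at *
    rw [map_neg, ha]

lemma mem_frobFix {Fr : AddAut Γ} {k : ℕ} {γ : Γ} :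
    γ ∈ frobFix Fr k ↔ (k • Fr) γ = γ := Iff.rfl

/-- `Fr ^ m` restricts to an endomorphism (in fact automorphism) of `Γ_n = ker L_n`. -/
def frobRestrict (Fr : AddAut Γ) (m n : ℕ) : ↥(frobFix Fr n) →+ ↥(frobFix Fr n) :=
  AddMonoidHom.mk'
    (fun γ => ⟨(m • Fr) (γ : Γ), by
      have hγ : (n • Fr) (γ : Γ) = (γ : Γ) := γ.2
      rw [mem_frobFix]
      calc (n • Fr) ((m • Fr) (γ : Γ)) = ((n + m) • Fr) (γ : Γ) := by
            rw [add_nsmul, AddAut.add_apply]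
        _ = ((m + n) • Fr) (γ : Γ) := by rw [Nat.add_comm]
        _ = (m • Fr) ((n • Fr) (γ : Γ)) := by rw [add_nsmul, AddAut.add_apply]
        _ = (m • Fr) (γ : Γ) := by rw [hγ]⟩)
    (fun a b => by
      apply Subtype.ext
      exact map_add (m • Fr) (a : Γ) (b : Γ))

/-- The trace map `γ ↦ Σ_{i=0}^{d-1} Fr^{i·m}(γ)` on `Γ` (with `d = n/m`). -/
def traceMap (Fr : AddAut Γ) (m d : ℕ) : Γ →+ Γ :=
  ∑ i ∈ Finset.range d, AddEquiv.toAddMonoidHom ((i * m) • Fr : AddAut Γ)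

/-! With `n = m * d`, the trace `T = Σ_{i<d} Fr^{im}` commutes with `Fr^m` and telescopes:
`T ∘ L_m = L_n`. Hence `L_m (T γ) = L_n γ`, so `T` maps `Γ_n` into `Γ_m`. Given `δ ∈ Γ_m`,
Lang for `L_n` gives `δ = L_n x = T (L_m x)`, and `L_m x ∈ Γ_n` because `L_m` and `L_n`
commute. Given `T γ = 0`, Lang for `L_m` gives `γ = L_m x`, and then `L_n x = T γ = 0`.
So `T : Γ_n → Γ_m` is onto with kernel `L_m(Γ_n)`, and a character of `Γ_n` factors through
it iff it kills `L_m(Γ_n)`, i.e. iff it is `Fr^m`-invariant. -/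

open Function

namespace AddMonoidHom

variable {A B C : Type*} [AddCommGroup A] [AddGroup B] [AddGroup C]

theorem range_sub_id_le_ker_iff (σ : A →+ A) (χ : A →+ C) :
    (σ - id A).range ≤ χ.ker ↔ ∀ a, χ (σ a) = χ a := by
  simp [SetLike.le_def, sub_eq_zero]

noncomputable def compEquivInvariant (f : A →+ B) (hf : Surjective f) (σ : A →+ A)
    (hker : f.ker = (σ - id A).range) :
    (B →+ C) ≃ {χ : A →+ C // ∀ a, χ (σ a) = χ a} :=
  (f.liftOfSurjective hf).symm.trans <| Equiv.subtypeEquivRight fun χ => by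
    rw [hker, range_sub_id_le_ker_iff]

theorem compEquivInvariant_apply (f : A →+ B) (hf : Surjective f) (σ : A →+ A)
    (hker : f.ker = (σ - id A).range) (χ : B →+ C) :
    (compEquivInvariant f hf σ hker χ).1 = χ.comp f :=
  rfl

end AddMonoidHom

variable (Fr : AddAut Γ)

theorem AddAut.nsmul_apply_nsmul_apply (a b : ℕ) (x : Γ) :
    (a • Fr) ((b • Fr) x) = ((a + b) • Fr) x := by
  rw [add_nsmul, AddAut.add_apply]

theorem AddAut.nsmul_apply_sub_comm (a b : ℕ) (x : Γ) :
    (a • Fr) ((b • Fr) x - x) - ((b • Fr) x - x) =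
      (b • Fr) ((a • Fr) x - x) - ((a • Fr) x - x) := by
  simp only [map_sub, AddAut.nsmul_apply_nsmul_apply, add_comm a b]
  abel

theorem traceMap_apply (m d : ℕ) (γ : Γ) :
    traceMap Fr m d γ = ∑ i ∈ Finset.range d, ((i * m) • Fr) γ := by
  simp [traceMap, AddMonoidHom.finsetSum_apply]

theorem traceMap_nsmul_apply (m d : ℕ) (γ : Γ) :
    traceMap Fr m d ((m • Fr) γ) = (m • Fr) (traceMap Fr m d γ) := by
  simp only [traceMap_apply, map_sum, AddAut.nsmul_apply_nsmul_apply, add_comm]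

theorem traceMap_nsmul_apply_sub (m d : ℕ) (x : Γ) :
    traceMap Fr m d ((m • Fr) x - x) = ((m * d) • Fr) x - x := by
  have h (i : ℕ) : ((i * m) • Fr) ((m • Fr) x) = (((i + 1) * m) • Fr) x := by
    rw [AddAut.nsmul_apply_nsmul_apply, add_one_mul]
  rw [traceMap_apply]
  simp only [map_sub, h]
  rw [Finset.sum_range_sub (fun i => ((i * m) • Fr) x), mul_comm]
  simp

theorem traceMap_mem_frobFix {m d : ℕ} {γ : Γ} (hγ : γ ∈ frobFix Fr (m * d)) :
    traceMap Fr m d γ ∈ frobFix Fr m := by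
  rw [mem_frobFix, ← sub_eq_zero, ← traceMap_nsmul_apply, ← map_sub,
    traceMap_nsmul_apply_sub, sub_eq_zero]
  exact hγ

theorem exists_traceMap_eq {m d : ℕ} (hLang : Surjective fun γ : Γ => ((m * d) • Fr) γ - γ)
    {δ : Γ} (hδ : δ ∈ frobFix Fr m) :
    ∃ γ ∈ frobFix Fr (m * d), traceMap Fr m d γ = δ := by
  obtain ⟨x, hx⟩ := hLang δ
  dsimp only at hx
  refine ⟨(m • Fr) x - x, ?_, by rw [traceMap_nsmul_apply_sub, hx]⟩
  rw [mem_frobFix, ← sub_eq_zero, AddAut.nsmul_apply_sub_comm, hx, sub_eq_zero]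
  exact hδ

theorem traceMap_eq_zero_iff {m d : ℕ} (hLang : Surjective fun γ : Γ => (m • Fr) γ - γ)
    {γ : Γ} :
    traceMap Fr m d γ = 0 ↔ ∃ x ∈ frobFix Fr (m * d), (m • Fr) x - x = γ := by
  constructor
  · intro h
    obtain ⟨x, rfl⟩ := hLang γ
    refine ⟨x, ?_, rfl⟩
    rwa [traceMap_nsmul_apply_sub, sub_eq_zero] at h
  · rintro ⟨x, hx, rfl⟩
    rw [traceMap_nsmul_apply_sub, sub_eq_zero]
    exact hx

def frobTrace (m d : ℕ) : frobFix Fr (m * d) →+ frobFix Fr m :=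
  ((traceMap Fr m d).comp (frobFix Fr (m * d)).subtype).codRestrict _ fun γ =>
    traceMap_mem_frobFix Fr γ.2

@[simp]
theorem coe_frobTrace (m d : ℕ) (γ : frobFix Fr (m * d)) :
    (frobTrace Fr m d γ : Γ) = traceMap Fr m d γ :=
  rfl

theorem frobTrace_surjective {m d : ℕ}
    (hLang : Surjective fun γ : Γ => ((m * d) • Fr) γ - γ) :
    Surjective (frobTrace Fr m d) := by
  intro δ
  obtain ⟨γ, hγ, h⟩ := exists_traceMap_eq Fr hLang δ.2
  exact ⟨⟨γ, hγ⟩, Subtype.ext h⟩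

theorem ker_frobTrace {m d : ℕ} (hLang : Surjective fun γ : Γ => (m • Fr) γ - γ) :
    (frobTrace Fr m d).ker = (frobRestrict Fr m (m * d) - AddMonoidHom.id _).range := by
  ext γ
  rw [AddMonoidHom.mem_ker, ← ZeroMemClass.coe_eq_zero, coe_frobTrace,
    traceMap_eq_zero_iff Fr hLang, AddMonoidHom.mem_range]
  exact ⟨fun ⟨x, hx, h⟩ => ⟨⟨x, hx⟩, Subtype.ext h⟩,
    fun ⟨x, h⟩ => ⟨x, x.2, congrArg Subtype.val h⟩⟩

/-- Abstract Lang-theorem setting: `Γ` an abelian group, `Fr` an automorphism with all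
`L_k = Fr^k - id` (`k ≥ 1`) surjective, `Γ_k = ker L_k`.  For `m ∣ n`:
(a) the trace `tr^n_m` maps `Γ_n` onto `Γ_m`, is additive, and its kernel on `Γ_n` is
exactly `L_m(Γ_n)`; (b) precomposition with `tr^n_m` is a bijection from `Hom(Γ_m, ℂˣ)`
onto the `Fr^m`-invariant elements of `Hom(Γ_n, ℂˣ)`. -/
theorem trace_base_change_bijection
    (Fr : AddAut Γ)
    (hLang : ∀ k : ℕ, 1 ≤ k → Function.Surjective (fun γ : Γ => (k • Fr) γ - γ))
    (m n : ℕ) (hm : 1 ≤ m) (hn : 1 ≤ n) (hmn : m ∣ n) :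
    (∀ γ ∈ frobFix Fr n, traceMap Fr m (n / m) γ ∈ frobFix Fr m) ∧
    (∀ γ δ : Γ, traceMap Fr m (n / m) (γ + δ) =
      traceMap Fr m (n / m) γ + traceMap Fr m (n / m) δ) ∧
    (∀ δ ∈ frobFix Fr m, ∃ γ ∈ frobFix Fr n, traceMap Fr m (n / m) γ = δ) ∧
    (∀ γ ∈ frobFix Fr n, (traceMap Fr m (n / m) γ = 0 ↔
      ∃ x ∈ frobFix Fr n, (m • Fr) x - x = γ)) ∧
    ∃ T : (↥(frobFix Fr m) →+ Additive ℂˣ) ≃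
        {χ : ↥(frobFix Fr n) →+ Additive ℂˣ //
          ∀ γ : ↥(frobFix Fr n), χ (frobRestrict Fr m n γ) = χ γ},
      ∀ (χ : ↥(frobFix Fr m) →+ Additive ℂˣ) (γ : ↥(frobFix Fr n))
        (δ : ↥(frobFix Fr m)),
        (δ : Γ) = traceMap Fr m (n / m) (γ : Γ) → (T χ).1 γ = χ δ := by
  obtain ⟨d, rfl⟩ := hmn
  rw [Nat.mul_div_cancel_left d hm]
  refine ⟨fun γ hγ => traceMap_mem_frobFix Fr hγ, fun γ δ => map_add _ γ δ,
    fun δ hδ => exists_traceMap_eq Fr (hLang _ hn) hδ,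
    fun γ _ => traceMap_eq_zero_iff Fr (hLang m hm),
    AddMonoidHom.compEquivInvariant _ (frobTrace_surjective Fr (hLang _ hn)) _
      (ker_frobTrace Fr (hLang m hm)), fun χ γ δ h => ?_⟩
  rw [AddMonoidHom.compEquivInvariant_apply]
  exact congrArg χ (Subtype.ext h.symm)
end

section
/- Let g be a finite nilpotent Lie ring and let f : (g, +) → ℂˣ be a homomorphism of abelian groups. Then g admits a polarization at f: there exists a Lie subring h ⊆ g such that f(⁅x, y⁆) = 1 for all x, y ∈ h, and h is maximal with respect to inclusion among all additive subgroups a of g satisfying f(⁅x, y⁆) = 1 for all x, y ∈ a. -/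
/-- The lower central series of a Lie ring, as additive subgroups:
`lcs 0 = g`, `lcs (k+1) = ⁅g, lcs k⁆`. -/
def lieLowerCentral (g : Type*) [LieRing g] : ℕ → AddSubgroup g
  | 0 => ⊤
  | k + 1 => AddSubgroup.closure {z : g | ∃ x : g, ∃ y ∈ lieLowerCentral g k, z = ⁅x, y⁆}

theorem aux_polar (g : Type*) [LieRing g] [Finite g]
    (hnilp : ∃ k : ℕ, lieLowerCentral g k = ⊥)
    (f : g → ℂˣ) (hf : ∀ x y : g, f (x + y) = f x * f y) :
    ∀ n : ℕ, ∀ S : AddSubgroup g, Nat.card S ≤ n →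
      (∀ x ∈ S, ∀ y ∈ S, ⁅x, y⁆ ∈ S) →
      ∃ h : AddSubgroup g, h ≤ S ∧ (∀ x ∈ h, ∀ y ∈ h, ⁅x, y⁆ ∈ h) ∧
        (∀ x ∈ h, ∀ y ∈ h, f ⁅x, y⁆ = 1) ∧
        (∀ x ∈ S, (∀ a ∈ h, f ⁅x, a⁆ = 1) → x ∈ h) := by
  have f0 : f 0 = 1 := by
    have h0 := hf 0 0
    rw [add_zero] at h0
    have : f 0 * 1 = f 0 * f 0 := by rw [mul_one, ← h0]
    exact (mul_left_cancel this).symm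
  have fneg : ∀ x : g, f (-x) = (f x)⁻¹ := by
    intro x
    have h0 := hf x (-x)
    rw [add_neg_cancel, f0] at h0
    exact eq_inv_of_mul_eq_one_right h0.symm
  have fskew : ∀ x y : g, f ⁅y, x⁆ = (f ⁅x, y⁆)⁻¹ := by
    intro x y
    rw [← lie_skew, fneg]
  have fsub : ∀ x y : g, f (x - y) = f x * (f y)⁻¹ := by
    intro x y
    rw [sub_eq_add_neg, hf, fneg]
  intro n
  induction n using Nat.strong_induction_on with
  | _ n IH =>
    intro S hcard hclosed
    by_cases hiso : ∀ x ∈ S, ∀ y ∈ S, f ⁅x, y⁆ = 1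
    · exact ⟨S, le_refl S, hclosed, hiso, fun x hx _ => hx⟩
    · -- there is a "good" k
      set P : ℕ → Prop := fun k =>
        ∃ y, y ∈ S ∧ y ∈ lieLowerCentral g k ∧ ∃ w ∈ S, f ⁅y, w⁆ ≠ 1 with hP
      have hP0 : P 0 := by
        push_neg at hiso
        obtain ⟨x, hx, w, hw, hxw⟩ := hiso
        exact ⟨x, hx, by simp [lieLowerCentral], w, hw, hxw⟩
      obtain ⟨K, hK⟩ := hnilp
      have hPK : ¬ P K := by
        rintro ⟨y, -, hy, w, -, hyw⟩
        rw [hK, AddSubgroup.mem_bot] at hy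
        subst hy
        rw [zero_lie, f0] at hyw
        exact hyw rfl
      have hkey : ∃ k, P k ∧ ¬ P (k + 1) := by
        by_contra hcon
        push_neg at hcon
        have : ∀ k, P k := by
          intro k
          induction k with
          | zero => exact hP0
          | succ k ih => exact hcon k ih
        exact hPK (this K)
      obtain ⟨k, ⟨y, hyS, hylcs, w0, hw0S, hw0⟩, hk1⟩ := hkey
      -- hk1 : ∀ z, z ∈ S → z ∈ lcs (k+1) → ∀ w ∈ S, f ⁅z, w⁆ = 1
      have hrad : ∀ z, z ∈ S → z ∈ lieLowerCentral g (k + 1) → ∀ w ∈ S, f ⁅z, w⁆ = 1 := by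
        intro z hzS hzl w hwS
        by_contra hne
        exact absurd ⟨z, hzS, hzl, w, hwS, hne⟩ hk1
      -- brackets against y land in lcs (k+1)
      have hbr : ∀ x : g, ⁅x, y⁆ ∈ lieLowerCentral g (k + 1) := by
        intro x
        show ⁅x, y⁆ ∈ AddSubgroup.closure _
        exact AddSubgroup.subset_closure ⟨x, y, hylcs, rfl⟩
      -- the subgroup S₀
      set S₀ : AddSubgroup g :=
        { carrier := {x | x ∈ S ∧ f ⁅x, y⁆ = 1}
          zero_mem' := ⟨S.zero_mem, by rw [zero_lie, f0]⟩
          add_mem' := fun {a b} ha hb =>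
            ⟨S.add_mem ha.1 hb.1, by rw [add_lie, hf, ha.2, hb.2, one_mul]⟩
          neg_mem' := fun {a} ha =>
            ⟨S.neg_mem ha.1, by rw [neg_lie, fneg, ha.2, inv_one]⟩ } with hS₀
      have hS₀mem : ∀ x : g, x ∈ S₀ ↔ x ∈ S ∧ f ⁅x, y⁆ = 1 := fun x => Iff.rfl
      have hS₀le : S₀ ≤ S := fun x hx => hx.1
      -- S₀ is closed under bracket
      have hS₀closed : ∀ a ∈ S₀, ∀ b ∈ S₀, ⁅a, b⁆ ∈ S₀ := by
        intro a ha b hb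
        refine ⟨hclosed a ha.1 b hb.1, ?_⟩
        have h1 : f ⁅a, ⁅b, y⁆⁆ = 1 := by
          rw [fskew]
          rw [hrad ⁅b, y⁆ (hclosed b hb.1 y hyS) (hbr b) a ha.1, inv_one]
        have h2 : f ⁅b, ⁅a, y⁆⁆ = 1 := by
          rw [fskew]
          rw [hrad ⁅a, y⁆ (hclosed a ha.1 y hyS) (hbr a) b hb.1, inv_one]
        rw [lie_lie, fsub, h1, h2, inv_one, mul_one]
      -- y ∈ S₀, w0 ∉ S₀
      have hyS₀ : y ∈ S₀ := ⟨hyS, by rw [lie_self, f0]⟩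
      have hw0n : w0 ∉ S₀ := by
        rintro ⟨-, hcontra⟩
        rw [fskew] at hcontra
        exact hw0 (by rw [← inv_inv (f ⁅y, w0⁆), hcontra, inv_one])
      -- cardinality drop
      have hlt : Nat.card S₀ < Nat.card S := by
        have hssub : (S₀ : Set g) ⊂ (S : Set g) :=
          ⟨fun x hx => hS₀le hx, fun hsub => hw0n (hsub hw0S)⟩
        have hc := Set.ncard_lt_ncard hssub (Set.toFinite _)
        rw [← Nat.card_coe_set_eq, ← Nat.card_coe_set_eq] at hc
        exact hc
      obtain ⟨h, hle, hclosed', hiso', hsat'⟩ :=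
        IH (Nat.card S₀) (lt_of_lt_of_le hlt hcard) S₀ (le_refl _) hS₀closed
      -- y ∈ h
      have hyh : y ∈ h := by
        apply hsat' y hyS₀
        intro a hah
        rw [fskew]
        rw [(hle hah).2, inv_one]
      refine ⟨h, le_trans hle hS₀le, hclosed', hiso', ?_⟩
      intro x hxS hxperp
      exact hsat' x ⟨hxS, hxperp y hyh⟩ hxperp

/-- Kirillov–Vergne: every finite nilpotent Lie ring `g` admits a polarization at every
homomorphism `f : (g, +) → ℂˣ`: a Lie subring `h` with `f(⁅h,h⁆) = 1` that is maximal
with respect to inclusion among all additive subgroups with this property. -/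
theorem polarization_exists_finite_nilpotent_lie_ring
    (g : Type*) [LieRing g] [Finite g]
    (hnilp : ∃ k : ℕ, lieLowerCentral g k = ⊥)
    (f : g → ℂˣ) (hf : ∀ x y : g, f (x + y) = f x * f y) :
    ∃ h : AddSubgroup g,
      (∀ x ∈ h, ∀ y ∈ h, ⁅x, y⁆ ∈ h) ∧
      (∀ x ∈ h, ∀ y ∈ h, f ⁅x, y⁆ = 1) ∧
      ∀ a : AddSubgroup g, (∀ x ∈ a, ∀ y ∈ a, f ⁅x, y⁆ = 1) →
        (h : Set g) ⊆ (a : Set g) → (a : Set g) = (h : Set g) := by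
  obtain ⟨h, -, hclosed, hiso, hsat⟩ :=
    aux_polar g hnilp f hf (Nat.card (⊤ : AddSubgroup g)) ⊤ (le_refl _)
      (fun x _ y _ => AddSubgroup.mem_top _)
  refine ⟨h, hclosed, hiso, ?_⟩
  intro a haiso hsub
  apply Set.Subset.antisymm ?_ hsub
  intro x hxa
  exact hsat x (AddSubgroup.mem_top x) fun b hb => haiso x hxa b (hsub hb)
end

section
/- Let Π be a finite group and φ : Π → Π a group automorphism. Call a function f : Π → ℂ a φ-class function if f(φ(γ)·x·γ⁻¹) = f(x) for all γ, x ∈ Π. Let (ρ_i : Π → GL(V_i))_{i ∈ I} be a family of pairwise non-isomorphic irreducible finite-dimensional complex representations of Π such that every irreducible finite-dimensional complex representation ρ of Π with ρ ∘ φ isomorphic to ρ is isomorphic to some ρ_i, and suppose for each i ∈ I we are given a linear automorphism φ_i of V_i satisfying ρ_i(φ(γ)) = φ_i⁻¹ ∘ ρ_i(γ) ∘ φ_i for all γ ∈ Π. Then each twisted character χ̃_i : Π → ℂ, χ̃_i(γ) := tr(φ_i ∘ ρ_i(γ)), is a φ-class function, and the family (χ̃_i)_{i ∈ I} is a basis of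 the ℂ-vector space of φ-class functions on Π. -/
/-- A representation is irreducible if the space is nonzero and the only invariant
subspaces are `⊥` and `⊤`. -/
def IsIrreducibleRep {G V : Type*} [Group G] [AddCommGroup V] [Module ℂ V]
    (ρ : G →* (V →ₗ[ℂ] V)) : Prop :=
  (∃ v : V, v ≠ 0) ∧
    ∀ W : Submodule ℂ V, (∀ g : G, ∀ v ∈ W, ρ g v ∈ W) → W = ⊥ ∨ W = ⊤

/-- Two representations are isomorphic if there is an intertwining linear equivalence. -/
def RepEquiv {G V W : Type*} [Group G] [AddCommGroup V] [Module ℂ V]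
    [AddCommGroup W] [Module ℂ W]
    (ρ : G →* (V →ₗ[ℂ] V)) (τ : G →* (W →ₗ[ℂ] W)) : Prop :=
  ∃ e : V ≃ₗ[ℂ] W, ∀ (g : G) (v : V), e (ρ g v) = τ g (e v)

/-- The space of `φ`-class functions on a group `P`: functions invariant under
`φ`-conjugation `x ↦ φ(γ)·x·γ⁻¹`. -/
noncomputable def phiClassFun {P : Type*} [Group P] (φ : P ≃* P) : Submodule ℂ (P → ℂ) where
  carrier := {f : P → ℂ | ∀ γ x : P, f (φ γ * x * γ⁻¹) = f x}
  add_mem' := by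
    intro a b ha hb
    simp only [Set.mem_setOf_eq] at *
    intro γ x
    simp [Pi.add_apply, ha γ x, hb γ x]
  zero_mem' := by
    intro γ x
    simp
  smul_mem' := by
    intro c a ha
    simp only [Set.mem_setOf_eq] at *
    intro γ x
    simp [Pi.smul_apply, ha γ x]

/-!
Pair a function `f` on `Π` with the `i`-th representation by
`⟨f, ρᵢ⟩ := tr ((∑ₓ f x • ρᵢ(x⁻¹)) ∘ Φᵢ⁻¹)`. Averaging `A ↦ Φᵢ ρᵢ(x) A ρⱼ(x⁻¹) Φⱼ⁻¹` over `x`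
maps `Hom(Vⱼ, Vᵢ)` into the intertwiners of `ρⱼ` and `ρᵢ`, and its trace is `⟨χ̃ᵢ, ρⱼ⟩`; Schur's
lemma then gives `⟨χ̃ᵢ, ρⱼ⟩ = |Π| δᵢⱼ`, hence linear independence (and finiteness of `I`).

For spanning, let `f` be a `φ`-class function with `⟨f, ρᵢ⟩ = 0` for all `i`. For any representation
`τ`, `∑ₓ f x • τ(x⁻¹)` intertwines `τ ∘ φ` with `τ`. For irreducible `τ` it therefore vanishes: by
Schur's lemma if `τ ∘ φ ≇ τ`, and otherwise `τ ≅ ρᵢ`, where it is `c • Φᵢ` with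
`c · dim Vᵢ = ⟨f, ρᵢ⟩ = 0`. Applied to the simple left ideals of the semisimple algebra `ℂ[Π]`,
this makes `∑ₓ f x • x⁻¹` annihilate `ℂ[Π]`, so it is `0`, i.e. `f = 0`.
-/

open LinearMap

namespace IsIrreducibleRep

variable {G V W : Type*} [Group G] [AddCommGroup V] [Module ℂ V] [AddCommGroup W] [Module ℂ W]
  {ρ : G →* (V →ₗ[ℂ] V)}

theorem nontrivial (hρ : IsIrreducibleRep ρ) : Nontrivial V :=
  let ⟨v, hv⟩ := hρ.1; ⟨⟨v, 0, hv⟩⟩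

theorem comp_mulEquiv (hρ : IsIrreducibleRep ρ) (φ : G ≃* G) :
    IsIrreducibleRep (ρ.comp φ.toMonoidHom) :=
  ⟨hρ.1, fun U hU => hρ.2 U fun g v hv => by simpa using hU (φ.symm g) v hv⟩

theorem eq_zero_or_repEquiv {σ : G →* (W →ₗ[ℂ] W)} (hρ : IsIrreducibleRep ρ)
    (hσ : IsIrreducibleRep σ) (T : V →ₗ[ℂ] W) (hT : ∀ g, σ g ∘ₗ T = T ∘ₗ ρ g) :
    T = 0 ∨ RepEquiv ρ σ := by
  have hcomm (g : G) (v : V) : σ g (T v) = T (ρ g v) := congr($(hT g) v)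
  rcases hρ.2 (ker T) (fun g v hv => by rw [mem_ker] at hv ⊢; rw [← hcomm, hv, map_zero])
    with hker | hker
  · rcases hσ.2 (range T) (by rintro g _ ⟨v, rfl⟩; exact ⟨ρ g v, (hcomm g v).symm⟩)
      with hrange | hrange
    · exact .inl (range_eq_bot.mp hrange)
    · exact .inr ⟨.ofBijective T ⟨ker_eq_bot.mp hker, range_eq_top.mp hrange⟩,
        fun g v => (hcomm g v).symm⟩
  · exact .inl (ker_eq_top.mp hker)

theorem eq_trace_smul_id [FiniteDimensional ℂ V] (hρ : IsIrreducibleRep ρ) (T : V →ₗ[ℂ] V)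
    (hT : ∀ g, T ∘ₗ ρ g = ρ g ∘ₗ T) :
    T = (trace ℂ V T / Module.finrank ℂ V) • LinearMap.id := by
  have := hρ.nontrivial
  obtain ⟨c, hc⟩ := Module.End.exists_eigenvalue T
  have hinv : ∀ g, ∀ v ∈ Module.End.eigenspace T c, ρ g v ∈ Module.End.eigenspace T c := by
    intro g v hv
    rw [Module.End.mem_eigenspace_iff] at hv ⊢
    rw [← LinearMap.comp_apply, hT, LinearMap.comp_apply, hv, map_smul]
  have hTc : T = c • LinearMap.id := by
    refine LinearMap.ext fun v => ?_
    have hv : v ∈ Module.End.eigenspace T c :=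
      ((hρ.2 _ hinv).resolve_left hc).symm ▸ Submodule.mem_top
    simpa using Module.End.mem_eigenspace_iff.mp hv
  have hd : (Module.finrank ℂ V : ℂ) ≠ 0 := by exact_mod_cast Module.finrank_pos.ne'
  rw [hTc, map_smul, trace_id, smul_eq_mul, mul_div_cancel_right₀ _ hd]

end IsIrreducibleRep

theorem LinearMap.trace_llcomp_comp_lcomp {V W : Type*} [AddCommGroup V] [Module ℂ V]
    [AddCommGroup W] [Module ℂ W] [FiniteDimensional ℂ V] [FiniteDimensional ℂ W]
    (B : W →ₗ[ℂ] W) (C : V →ₗ[ℂ] V) :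
    trace ℂ (V →ₗ[ℂ] W) (llcomp ℂ V W W B ∘ₗ lcomp ℂ W C) = trace ℂ W B * trace ℂ V C := by
  let e := dualTensorHomEquiv ℂ V W
  have hconj : llcomp ℂ V W W B ∘ₗ lcomp ℂ W C =
      e.conj (TensorProduct.map (Module.Dual.transpose C) B) := by
    have key : (llcomp ℂ V W W B ∘ₗ lcomp ℂ W C) ∘ₗ e.toLinearMap =
        e.toLinearMap ∘ₗ TensorProduct.map (Module.Dual.transpose C) B :=
      TensorProduct.ext' fun f w => by ext v; simp [e, Module.Dual.transpose_apply]
    rw [LinearEquiv.conj_apply, ← key, comp_assoc, LinearEquiv.comp_symm, comp_id]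
  rw [hconj, trace_conj', trace_tensorProduct', trace_transpose', mul_comm]

theorem AddMonoidHom.eq_zero_of_forall_isSimpleModule {R M N : Type*} [Ring R] [AddCommGroup M]
    [Module R M] [IsSemisimpleModule R M] [AddCommGroup N] (L : M →+ N)
    (h : ∀ W : Submodule R M, IsSimpleModule R W → ∀ w ∈ W, L w = 0) : L = 0 := by
  have : (⊤ : Submodule R M).toAddSubmonoid ≤ AddMonoidHom.mker L := by
    rw [← IsSemisimpleModule.sSup_simples_eq_top, sSup_eq_iSup', Submodule.iSup_toAddSubmonoid]
    exact iSup_le fun W w hw => h W W.2 w hw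
  ext a
  exact this trivial

theorem Submodule.span_range_eq_of_dual_eq_zero_one {R M ι : Type*} [CommRing R]
    [AddCommGroup M] [Module R M] [Fintype ι] {S : Submodule R M} {v : ι → M}
    (hv : ∀ i, v i ∈ S) (f : ι → Module.Dual R M) (h1 : Pairwise fun i j ↦ f i (v j) = 0)
    (h2 : ∀ i, f i (v i) = 1) (htotal : ∀ m ∈ S, (∀ i, f i m = 0) → m = 0) :
    span R (Set.range v) = S := by
  classical
  refine le_antisymm (span_le.mpr (Set.range_subset_iff.mpr hv)) fun m hm => ?_
  have hm' : m - ∑ i, f i m • v i = 0 := by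
    refine htotal _ (S.sub_mem hm (S.sum_mem fun i _ => S.smul_mem _ (hv i))) fun j => ?_
    rw [map_sub, map_sum, Finset.sum_eq_single j (fun i _ hij => by simp [h1 hij.symm])
      (by simp)]
    simp [h2]
  rw [sub_eq_zero.mp hm']
  exact sum_mem fun i _ => smul_mem _ _ (subset_span ⟨i, rfl⟩)

section Twisted

variable {P V : Type*} [Group P] [AddCommGroup V] [Module ℂ V]

def IsTwistedBy (φ : P ≃* P) (σ : P →* (V →ₗ[ℂ] V)) (Φ : V ≃ₗ[ℂ] V) : Prop :=
  ∀ γ, σ (φ γ) = Φ.symm.toLinearMap ∘ₗ σ γ ∘ₗ Φ.toLinearMap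

variable {φ : P ≃* P} {σ : P →* (V →ₗ[ℂ] V)} {Φ : V ≃ₗ[ℂ] V}

theorem IsTwistedBy.apply_apply (h : IsTwistedBy φ σ Φ) (γ : P) (v : V) :
    σ γ (Φ v) = Φ (σ (φ γ) v) := by
  simp [h γ]

theorem IsTwistedBy.symm_apply_apply (h : IsTwistedBy φ σ Φ) (γ : P) (v : V) :
    Φ.symm (σ γ v) = σ (φ γ) (Φ.symm v) := by
  simp [h γ]

noncomputable def twistedChar (σ : P →* (V →ₗ[ℂ] V)) (Φ : V ≃ₗ[ℂ] V) : P → ℂ :=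
  fun γ => trace ℂ V (Φ.toLinearMap ∘ₗ σ γ)

theorem twistedChar_mem_phiClassFun [FiniteDimensional ℂ V] (h : IsTwistedBy φ σ Φ) :
    twistedChar σ Φ ∈ phiClassFun φ := by
  intro γ x
  have hconj : Φ.toLinearMap ∘ₗ σ (φ γ * x * γ⁻¹) =
      σ γ ∘ₗ (Φ.toLinearMap ∘ₗ σ x ∘ₗ σ γ⁻¹) := by
    ext v
    simp [h.apply_apply, Module.End.mul_apply]
  have hcancel : (Φ.toLinearMap ∘ₗ σ x ∘ₗ σ γ⁻¹) ∘ₗ σ γ = Φ.toLinearMap ∘ₗ σ x := by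
    ext v
    simp [← Module.End.mul_apply, ← map_mul]
  simp only [twistedChar]
  rw [hconj, trace_comp_comm', hcancel]

end Twisted

section Averaging

variable {P V W : Type*} [Group P] [Fintype P]
  [AddCommGroup V] [Module ℂ V] [AddCommGroup W] [Module ℂ W]

noncomputable def invWeightedSum (τ : P →* (W →ₗ[ℂ] W)) : (P → ℂ) →ₗ[ℂ] (W →ₗ[ℂ] W) :=
  Fintype.linearCombination ℂ fun x => τ x⁻¹

theorem invWeightedSum_apply (τ : P →* (W →ₗ[ℂ] W)) (f : P → ℂ) :
    invWeightedSum τ f = ∑ x, f x • τ x⁻¹ :=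
  rfl

theorem invWeightedSum_intertwines {φ : P ≃* P} (τ : P →* (W →ₗ[ℂ] W)) {f : P → ℂ}
    (hf : f ∈ phiClassFun φ) (γ : P) :
    τ γ ∘ₗ invWeightedSum τ f = invWeightedSum τ f ∘ₗ τ (φ γ) := by
  simp only [← Module.End.mul_eq_comp, invWeightedSum_apply, Finset.mul_sum, Finset.sum_mul,
    mul_smul_comm, smul_mul_assoc, ← map_mul]
  refine Fintype.sum_equiv ((Equiv.mulLeft (φ γ)).trans (Equiv.mulRight γ⁻¹)) _ _ fun x => ?_
  simp only [Equiv.trans_apply, Equiv.coe_mulLeft, Equiv.coe_mulRight, hf γ x]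
  congr 2
  group

theorem RepEquiv.invWeightedSum_eq_zero {τ : P →* (W →ₗ[ℂ] W)} {σ : P →* (V →ₗ[ℂ] V)}
    (h : RepEquiv τ σ) {f : P → ℂ} (hσ : invWeightedSum σ f = 0) : invWeightedSum τ f = 0 := by
  obtain ⟨e, he⟩ := h
  ext w
  apply e.injective
  have : e (invWeightedSum τ f w) = invWeightedSum σ f (e w) := by
    simp [invWeightedSum_apply, he]
  rw [this, hσ]
  simp

noncomputable def twistedPairing (σ : P →* (V →ₗ[ℂ] V)) (Φ : V ≃ₗ[ℂ] V) : (P → ℂ) →ₗ[ℂ] ℂ :=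
  trace ℂ V ∘ₗ lcomp ℂ V Φ.symm.toLinearMap ∘ₗ invWeightedSum σ

theorem twistedPairing_apply (σ : P →* (V →ₗ[ℂ] V)) (Φ : V ≃ₗ[ℂ] V) (f : P → ℂ) :
    twistedPairing σ Φ f = ∑ x, f x * trace ℂ V (σ x⁻¹ ∘ₗ Φ.symm.toLinearMap) := by
  simp [twistedPairing, invWeightedSum_apply, lcomp_apply']

theorem IsIrreducibleRep.invWeightedSum_eq_zero [FiniteDimensional ℂ V] {φ : P ≃* P}
    {σ : P →* (V →ₗ[ℂ] V)} {Φ : V ≃ₗ[ℂ] V} (hσ : IsIrreducibleRep σ) (hΦ : IsTwistedBy φ σ Φ)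
    {f : P → ℂ} (hf : f ∈ phiClassFun φ) (h0 : twistedPairing σ Φ f = 0) :
    invWeightedSum σ f = 0 := by
  set T := invWeightedSum σ f ∘ₗ Φ.symm.toLinearMap
  have hT : ∀ g, T ∘ₗ σ g = σ g ∘ₗ T := fun g => by
    ext v
    simp [T, hΦ.symm_apply_apply, ← LinearMap.comp_apply (σ g), invWeightedSum_intertwines σ hf]
  have hT0 : T = 0 := by
    have htr : trace ℂ V T = 0 := h0
    rw [hσ.eq_trace_smul_id T hT, htr, zero_div, zero_smul]
  ext v
  simpa [T] using congr($hT0 (Φ v))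

end Averaging

section Orthogonality

variable {P V W : Type*} [Group P] [Fintype P]
  [AddCommGroup V] [Module ℂ V] [AddCommGroup W] [Module ℂ W]

noncomputable def homAvg (σ : P →* (V →ₗ[ℂ] V)) (Φσ : V ≃ₗ[ℂ] V) (τ : P →* (W →ₗ[ℂ] W))
    (Φτ : W ≃ₗ[ℂ] W) : (W →ₗ[ℂ] V) →ₗ[ℂ] (W →ₗ[ℂ] V) :=
  ∑ x, llcomp ℂ W V V (Φσ.toLinearMap ∘ₗ σ x) ∘ₗ lcomp ℂ V (τ x⁻¹ ∘ₗ Φτ.symm.toLinearMap)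

theorem homAvg_apply (σ : P →* (V →ₗ[ℂ] V)) (Φσ : V ≃ₗ[ℂ] V) (τ : P →* (W →ₗ[ℂ] W))
    (Φτ : W ≃ₗ[ℂ] W) (A : W →ₗ[ℂ] V) :
    homAvg σ Φσ τ Φτ A =
      ∑ x, (Φσ.toLinearMap ∘ₗ σ x) ∘ₗ A ∘ₗ τ x⁻¹ ∘ₗ Φτ.symm.toLinearMap := by
  simp [homAvg, lcomp_apply', llcomp_apply', comp_assoc]

theorem homAvg_intertwines {φ : P ≃* P} {σ : P →* (V →ₗ[ℂ] V)} {Φσ : V ≃ₗ[ℂ] V}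
    {τ : P →* (W →ₗ[ℂ] W)} {Φτ : W ≃ₗ[ℂ] W} (hσ : IsTwistedBy φ σ Φσ) (hτ : IsTwistedBy φ τ Φτ)
    (A : W →ₗ[ℂ] V) (γ : P) :
    σ γ ∘ₗ homAvg σ Φσ τ Φτ A = homAvg σ Φσ τ Φτ A ∘ₗ τ γ := by
  ext w
  simp only [homAvg_apply, comp_apply, LinearMap.sum_apply, map_sum, LinearEquiv.coe_coe,
    hσ.apply_apply, hτ.symm_apply_apply]
  refine Fintype.sum_equiv (Equiv.mulLeft (φ γ)) _ _ fun x => ?_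
  simp only [Equiv.coe_mulLeft, ← Module.End.mul_apply, ← map_mul, mul_inv_rev,
    inv_mul_cancel_right]

variable [FiniteDimensional ℂ V] [FiniteDimensional ℂ W]

theorem trace_homAvg (σ : P →* (V →ₗ[ℂ] V)) (Φσ : V ≃ₗ[ℂ] V) (τ : P →* (W →ₗ[ℂ] W))
    (Φτ : W ≃ₗ[ℂ] W) :
    trace ℂ _ (homAvg σ Φσ τ Φτ) = twistedPairing τ Φτ (twistedChar σ Φσ) := by
  simp [homAvg, trace_llcomp_comp_lcomp, twistedPairing_apply, twistedChar]

variable {φ : P ≃* P} {σ : P →* (V →ₗ[ℂ] V)} {Φσ : V ≃ₗ[ℂ] V}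

theorem twistedPairing_twistedChar_of_not_repEquiv {τ : P →* (W →ₗ[ℂ] W)} {Φτ : W ≃ₗ[ℂ] W}
    (hσ : IsIrreducibleRep σ) (hτ : IsIrreducibleRep τ) (hΦσ : IsTwistedBy φ σ Φσ)
    (hΦτ : IsTwistedBy φ τ Φτ) (hne : ¬ RepEquiv τ σ) :
    twistedPairing τ Φτ (twistedChar σ Φσ) = 0 := by
  have hzero : homAvg σ Φσ τ Φτ = 0 := LinearMap.ext fun A =>
    (hτ.eq_zero_or_repEquiv hσ _ (homAvg_intertwines hΦσ hΦτ A)).resolve_right hne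
  rw [← trace_homAvg, hzero, map_zero]

theorem twistedPairing_twistedChar_self (hσ : IsIrreducibleRep σ) (hΦσ : IsTwistedBy φ σ Φσ) :
    twistedPairing σ Φσ (twistedChar σ Φσ) = Fintype.card P := by
  have := hσ.nontrivial
  have hd : (Module.finrank ℂ V : ℂ) ≠ 0 := by exact_mod_cast Module.finrank_pos.ne'
  have htrace (A : V →ₗ[ℂ] V) : trace ℂ V (homAvg σ Φσ σ Φσ A) = Fintype.card P * trace ℂ V A := by
    have hconj (x : P) : trace ℂ V ((Φσ.toLinearMap ∘ₗ σ x) ∘ₗ A ∘ₗ σ x⁻¹ ∘ₗ Φσ.symm.toLinearMap) =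
        trace ℂ V A := by
      rw [trace_comp_comm']
      congr 1
      ext v
      simp [← Module.End.mul_apply, ← map_mul]
    simp [homAvg_apply, hconj]
  have hscalar : homAvg σ Φσ σ Φσ =
      (Fintype.card P / Module.finrank ℂ V : ℂ) • (trace ℂ V).smulRight LinearMap.id := by
    ext1 A
    rw [hσ.eq_trace_smul_id _ fun g => (homAvg_intertwines hΦσ hΦσ A g).symm, htrace]
    simp [smul_smul, mul_div_right_comm]
  rw [← trace_homAvg, hscalar, map_smul, trace_smulRight, trace_id, smul_eq_mul,
    div_mul_cancel₀ _ hd]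

end Orthogonality

section GroupAlgebra

variable {P : Type*} [Group P]

noncomputable def leftIdealRep (W : Submodule (MonoidAlgebra ℂ P) (MonoidAlgebra ℂ P)) :
    P →* (W →ₗ[ℂ] W) :=
  (Module.toModuleEnd ℂ (S := MonoidAlgebra ℂ P) W).toMonoidHom.comp (MonoidAlgebra.of ℂ P)

theorem coe_leftIdealRep_apply (W : Submodule (MonoidAlgebra ℂ P) (MonoidAlgebra ℂ P)) (g : P)
    (w : W) : (leftIdealRep W g w : MonoidAlgebra ℂ P) = MonoidAlgebra.of ℂ P g * w :=
  rfl

theorem isIrreducibleRep_leftIdealRep (W : Submodule (MonoidAlgebra ℂ P) (MonoidAlgebra ℂ P))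
    [IsSimpleModule (MonoidAlgebra ℂ P) W] : IsIrreducibleRep (leftIdealRep W) := by
  have := IsSimpleModule.nontrivial (MonoidAlgebra ℂ P) W
  refine ⟨exists_ne 0, fun U hU => ?_⟩
  rcases eq_bot_or_eq_top (MonoidAlgebra.submoduleOfSMulMem U hU) with h | h
  · exact .inl (SetLike.ext fun w => SetLike.ext_iff.mp h w)
  · exact .inr (SetLike.ext fun w => SetLike.ext_iff.mp h w)

theorem eq_zero_of_forall_invWeightedSum_leftIdealRep_eq_zero [Fintype P] {f : P → ℂ}
    (h : ∀ W : Submodule (MonoidAlgebra ℂ P) (MonoidAlgebra ℂ P),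
      IsSimpleModule (MonoidAlgebra ℂ P) W → invWeightedSum (leftIdealRep W) f = 0) :
    f = 0 := by
  classical
  set e : MonoidAlgebra ℂ P := ∑ x, f x • MonoidAlgebra.of ℂ P x⁻¹
  have hmul : AddMonoidHom.mulLeft e = 0 :=
    (AddMonoidHom.mulLeft e).eq_zero_of_forall_isSimpleModule fun W hW w hw => by
      rw [AddMonoidHom.coe_mulLeft, Finset.sum_mul]
      simp_rw [smul_mul_assoc]
      simpa [invWeightedSum_apply, coe_leftIdealRep_apply] using
        congr(($(h W hW) ⟨w, hw⟩ : MonoidAlgebra ℂ P))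
  have he : e = 0 := by simpa using congr($hmul 1)
  ext z
  simpa [e, MonoidAlgebra.coeff_sum, Finsupp.single_apply] using congr(($he).coeff z⁻¹)

end GroupAlgebra

section Exhaustive

variable {P : Type} [Group P] [Fintype P] {φ : P ≃* P} {I : Type} {V : I → Type}
  [∀ i, AddCommGroup (V i)] [∀ i, Module ℂ (V i)] [∀ i, FiniteDimensional ℂ (V i)]
  {ρ : ∀ i, P →* (V i →ₗ[ℂ] V i)} {Φ : ∀ i, V i ≃ₗ[ℂ] V i}

theorem invWeightedSum_eq_zero_of_forall_twistedPairing_eq_zero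
    (hirr : ∀ i, IsIrreducibleRep (ρ i))
    (hexh : ∀ (W : Type) [AddCommGroup W] [Module ℂ W] [FiniteDimensional ℂ W]
      (τ : P →* (W →ₗ[ℂ] W)), IsIrreducibleRep τ →
      RepEquiv (τ.comp φ.toMonoidHom) τ → ∃ i, RepEquiv τ (ρ i))
    (hint : ∀ i, IsTwistedBy φ (ρ i) (Φ i)) {f : P → ℂ} (hf : f ∈ phiClassFun φ)
    (h0 : ∀ i, twistedPairing (ρ i) (Φ i) f = 0) {W : Type} [AddCommGroup W] [Module ℂ W]
    [FiniteDimensional ℂ W] {τ : P →* (W →ₗ[ℂ] W)} (hτ : IsIrreducibleRep τ) :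
    invWeightedSum τ f = 0 := by
  rcases (hτ.comp_mulEquiv φ).eq_zero_or_repEquiv hτ _ (invWeightedSum_intertwines τ hf)
    with h | h
  · exact h
  · obtain ⟨i, hi⟩ := hexh W τ hτ h
    exact hi.invWeightedSum_eq_zero ((hirr i).invWeightedSum_eq_zero (hint i) hf (h0 i))

theorem eq_zero_of_forall_twistedPairing_eq_zero
    (hirr : ∀ i, IsIrreducibleRep (ρ i))
    (hexh : ∀ (W : Type) [AddCommGroup W] [Module ℂ W] [FiniteDimensional ℂ W]
      (τ : P →* (W →ₗ[ℂ] W)), IsIrreducibleRep τ →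
      RepEquiv (τ.comp φ.toMonoidHom) τ → ∃ i, RepEquiv τ (ρ i))
    (hint : ∀ i, IsTwistedBy φ (ρ i) (Φ i)) {f : P → ℂ} (hf : f ∈ phiClassFun φ)
    (h0 : ∀ i, twistedPairing (ρ i) (Φ i) f = 0) : f = 0 :=
  eq_zero_of_forall_invWeightedSum_leftIdealRep_eq_zero fun W _ =>
    invWeightedSum_eq_zero_of_forall_twistedPairing_eq_zero hirr hexh hint hf h0
      (isIrreducibleRep_leftIdealRep W)

end Exhaustive

/-- Twisted characters of the `φ`-fixed irreducible representations of a finite group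
form a basis of the space of `φ`-class functions. -/
theorem twisted_characters_basis_of_phi_class_functions
    {P : Type} [Group P] [Finite P] (φ : P ≃* P)
    {I : Type} (V : I → Type)
    [∀ i, AddCommGroup (V i)] [∀ i, Module ℂ (V i)] [∀ i, FiniteDimensional ℂ (V i)]
    (ρ : ∀ i, P →* (V i →ₗ[ℂ] V i))
    (hirr : ∀ i, IsIrreducibleRep (ρ i))
    (hdisj : ∀ i j : I, i ≠ j → ¬ RepEquiv (ρ i) (ρ j))
    (hexh : ∀ (W : Type) [AddCommGroup W] [Module ℂ W] [FiniteDimensional ℂ W]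
      (τ : P →* (W →ₗ[ℂ] W)), IsIrreducibleRep τ →
      RepEquiv (τ.comp φ.toMonoidHom) τ → ∃ i, RepEquiv τ (ρ i))
    (Φ : ∀ i, V i ≃ₗ[ℂ] V i)
    (hint : ∀ (i : I) (γ : P),
      ρ i (φ γ) = (Φ i).symm.toLinearMap ∘ₗ ρ i γ ∘ₗ (Φ i).toLinearMap) :
    (∀ i, (fun γ : P => LinearMap.trace ℂ (V i) ((Φ i).toLinearMap ∘ₗ ρ i γ)) ∈
        phiClassFun φ) ∧
    LinearIndependent ℂ
      (fun i : I => fun γ : P => LinearMap.trace ℂ (V i) ((Φ i).toLinearMap ∘ₗ ρ i γ)) ∧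
    Submodule.span ℂ
      (Set.range (fun i : I => fun γ : P =>
        LinearMap.trace ℂ (V i) ((Φ i).toLinearMap ∘ₗ ρ i γ))) = phiClassFun φ := by
  cases nonempty_fintype P
  have hcard : (Fintype.card P : ℂ) ≠ 0 := Nat.cast_ne_zero.mpr Fintype.card_ne_zero
  let ε i := (Fintype.card P : ℂ)⁻¹ • twistedPairing (ρ i) (Φ i)
  have hne : Pairwise fun i j ↦ ε i (twistedChar (ρ j) (Φ j)) = 0 := fun i j hij => by
    simp [ε, twistedPairing_twistedChar_of_not_repEquiv (hirr j) (hirr i) (hint j) (hint i)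
      (hdisj i j hij)]
  have hself : ∀ i, ε i (twistedChar (ρ i) (Φ i)) = 1 := fun i => by
    simp [ε, twistedPairing_twistedChar_self (hirr i) (hint i), hcard]
  have hli := LinearIndependent.of_pairwise_dual_eq_zero_one _ ε hne hself
  have := hli.finite
  cases nonempty_fintype I
  refine ⟨fun i => twistedChar_mem_phiClassFun (hint i), hli,
    Submodule.span_range_eq_of_dual_eq_zero_one (fun i => twistedChar_mem_phiClassFun (hint i))
      ε hne hself fun f hf h0 => eq_zero_of_forall_twistedPairing_eq_zero hirr hexh hint hf
        fun i => by simpa [ε, hcard] using h0 i⟩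
end

section
/- Let A be an associative (not necessarily unital or commutative) algebra over a field k, equipped with a chain of two-sided ideals 0 = V_0 ⊆ V_1 ⊆ ⋯ ⊆ V_n = A such that dim_k(V_i/V_{i−1}) ≤ 1 for all 1 ≤ i ≤ n, and let B : A × A → k be an alternating bilinear form satisfying B(xy, z) + B(yz, x) + B(zx, y) = 0 for all x, y, z ∈ A. For each i set K_i := {v ∈ V_i : B(v, w) = 0 for all w ∈ V_i}. Then the subspace L := K_1 + K_2 + ⋯ + K_n is multiplicatively closed, i.e. L is a k-subalgebra of A. -/
/-- The orthogonal complement of a subspace with respect to a bilinear form. -/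
def orthogonalCompl {k V : Type*} [Field k] [AddCommGroup V] [Module k V]
    (B : V →ₗ[k] V →ₗ[k] k) (W : Submodule k V) : Submodule k V where
  carrier := {v : V | ∀ w ∈ W, B v w = 0}
  add_mem' := by
    intro a b ha hb
    simp only [Set.mem_setOf_eq] at *
    intro w hw
    rw [map_add, LinearMap.add_apply, ha w hw, hb w hw, add_zero]
  zero_mem' := by
    simp only [Set.mem_setOf_eq]
    intro w hw
    rw [map_zero, LinearMap.zero_apply]
  smul_mem' := by
    intro c a ha
    simp only [Set.mem_setOf_eq] at *
    intro w hw
    rw [map_smul, LinearMap.smul_apply, ha w hw, smul_zero]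

/-- Vergne's theorem for associative algebras (after C. André): let `A` be an associative
(not necessarily unital) algebra over a field `k` with a chain of two-sided ideals
`0 = V_0 ⊆ V_1 ⊆ ⋯ ⊆ V_n = A` whose successive quotients have dimension at most `1`,
and let `B` be an alternating bilinear form on `A` with
`B(xy,z) + B(yz,x) + B(zx,y) = 0`.  Then `L = Σ_i Ker (B|_{V_i})` is multiplicatively
closed, i.e. a subalgebra of `A`. -/
theorem vergne_associative_subalgebra
    {k A : Type*} [Field k] [NonUnitalRing A] [Module k A]
    [IsScalarTower k A A] [SMulCommClass k A A]
    (n : ℕ) (V : ℕ → Submodule k A)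
    (h0 : V 0 = ⊥) (hn : V n = ⊤)
    (hmono : ∀ i < n, V i ≤ V (i + 1))
    (hideal : ∀ i ≤ n, ∀ a : A, ∀ x ∈ V i, a * x ∈ V i ∧ x * a ∈ V i)
    (hstep : ∀ i < n,
      Module.rank k (↥(V (i + 1)) ⧸ Submodule.comap (V (i + 1)).subtype (V i)) ≤ 1)
    (B : A →ₗ[k] A →ₗ[k] k) (halt : ∀ v : A, B v v = 0)
    (hcyc : ∀ x y z : A, B (x * y) z + B (y * z) x + B (z * x) y = 0) :
    ∀ x y : A,
      x ∈ (⨆ i ∈ Finset.Icc 1 n, (V i ⊓ orthogonalCompl B (V i))) →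
      y ∈ (⨆ i ∈ Finset.Icc 1 n, (V i ⊓ orthogonalCompl B (V i))) →
      x * y ∈ (⨆ i ∈ Finset.Icc 1 n, (V i ⊓ orthogonalCompl B (V i))) := by
  have hskew : ∀ a b : A, B a b = -B b a := by
    intro a b
    have h := halt (a + b)
    simp only [map_add, LinearMap.add_apply, halt] at h
    linear_combination h
  have hle : ∀ i j, i ≤ j → j ≤ n → V i ≤ V j := by
    intro i j hij
    induction j with
    | zero =>
      intro _; interval_cases i; exact le_refl _
    | succ m ih =>
      intro hjn
      rcases Nat.lt_or_ge i (m + 1) with h | h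
      · exact (ih (Nat.lt_succ_iff.mp h) (le_trans (Nat.le_succ m) hjn)).trans
          (hmono m (Nat.lt_of_lt_of_le (Nat.lt_succ_self m) hjn))
      · have : i = m + 1 := le_antisymm hij h
        subst this; exact le_refl _
  set L := ⨆ i ∈ Finset.Icc 1 n, (V i ⊓ orthogonalCompl B (V i)) with hL
  have key : ∀ i ∈ Finset.Icc 1 n, ∀ j ∈ Finset.Icc 1 n,
      ∀ a ∈ V i ⊓ orthogonalCompl B (V i), ∀ b ∈ V j ⊓ orthogonalCompl B (V j),
      a * b ∈ L := by
    intro i hi j hj a ha b hb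
    obtain ⟨hai, hao⟩ := ha
    obtain ⟨hbj, hbo⟩ := hb
    simp only [Finset.mem_Icc] at hi hj
    set m := min i j with hm
    have hm1 : 1 ≤ m := le_min hi.1 hj.1
    have hmn : m ≤ n := le_trans (min_le_left i j) hi.2
    have hmi : V m ≤ V i := hle m i (min_le_left i j) hi.2
    have hmj : V m ≤ V j := hle m j (min_le_right i j) hj.2
    have hab : a * b ∈ V m := by
      rcases le_total i j with h | h
      · rw [hm, min_eq_left h]; exact (hideal i hi.2 b a hai).2
      · rw [hm, min_eq_right h]; exact (hideal j hj.2 a b hbj).1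
    have horth : ∀ w ∈ V m, B (a * b) w = 0 := by
      intro w hw
      have h1 := hcyc a b w
      have h2 : B (b * w) a = 0 := by
        rw [hskew, hao (b * w) (hmi ((hideal m hmn b w hw).1)), neg_zero]
      have h3 : B (w * a) b = 0 := by
        rw [hskew, hbo (w * a) (hmj ((hideal m hmn a w hw).2)), neg_zero]
      linear_combination h1 - h2 - h3
    have hmem : a * b ∈ V m ⊓ orthogonalCompl B (V m) := ⟨hab, horth⟩
    exact Submodule.mem_iSup_of_mem m
      (Submodule.mem_iSup_of_mem (Finset.mem_Icc.mpr ⟨hm1, hmn⟩) hmem)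
  have step1 : ∀ j ∈ Finset.Icc 1 n, ∀ b ∈ V j ⊓ orthogonalCompl B (V j),
      ∀ a ∈ L, a * b ∈ L := by
    intro j hj b hb a ha
    have hc : L ≤ Submodule.comap (LinearMap.mulRight k b) L := by
      conv_lhs => rw [hL]
      refine iSup₂_le fun i hi => ?_
      intro a' ha'
      simp only [Submodule.mem_comap, LinearMap.mulRight_apply]
      exact key i hi j hj a' ha' b hb
    have := hc ha
    simpa using this
  intro x y hx hy
  have hc : L ≤ Submodule.comap (LinearMap.mulLeft k x) L := by
    conv_lhs => rw [hL]
    refine iSup₂_le fun j hj => ?_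
    intro b hb
    simp only [Submodule.mem_comap, LinearMap.mulLeft_apply]
    exact step1 j hj b hb x hx
  have := hc hy
  simpa using this
end

section
/- Let Γ be a finite group. Call an irreducible finite-dimensional complex representation ρ of Γ a Heisenberg representation if ρ(g) = id for every g in the iterated commutator subgroup ⁅Γ, ⁅Γ, Γ⁆⁆. Then: (a) for every Heisenberg representation ρ there is a unique homomorphism ν_ρ : ⁅Γ, Γ⁆ → ℂˣ with ρ(x) = ν_ρ(x)·id for all x ∈ ⁅Γ, Γ⁆, and ν_ρ is invariant under conjugation by Γ; (b) letting C_ρ ⊆ Γ denote the preimage in Γ of the center of Γ/ker(ν_ρ), there is a unique homomorphism ν̃_ρ : C_ρ → ℂˣ with ρ(x) = ν̃_ρ(x)·id for all x ∈ C_ρ, and ν̃_ρ extends ν_ρ; (c) the assignment ρ ↦ (ν_ρ, ν̃_ρ) induces a bijection from the set of isomorphism classes of Heisenberg representations of Γ onto the set S(Γ) of all pairs (ν, ν̃) in which ν : ⁅Γ, Γ⁆ → ℂˣ is a homomorphism invariant under conjugation by Γ and ν̃ is a homomorphism extending ν from ⁅Γ, Γ⁆ to the preimage in Γ of the center of Γ/ker(ν).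 -/
/-- A bundled irreducible finite-dimensional complex representation of a group `G`. -/
structure IrrRep (G : Type) [Group G] where
  carrier : Type
  [isAddCommGroup : AddCommGroup carrier]
  [isModule : Module ℂ carrier]
  [isFiniteDimensional : FiniteDimensional ℂ carrier]
  ρ : G →* (carrier →ₗ[ℂ] carrier)
  nontrivial : ∃ v : carrier, v ≠ 0
  irreducible : ∀ W : Submodule ℂ carrier,
    (∀ g : G, ∀ v ∈ W, ρ g v ∈ W) → W = ⊥ ∨ W = ⊤

attribute [instance] IrrRep.isAddCommGroup IrrRep.isModule IrrRep.isFiniteDimensional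

variable (G : Type) [Group G]

/-- A Heisenberg representation: an irreducible representation that is trivial on
`⁅Γ, ⁅Γ, Γ⁆⁆`. -/
def IsHeisenbergRep (ρ : IrrRep G) : Prop :=
  ∀ g ∈ ⁅(⊤ : Subgroup G), commutator G⁆, ρ.ρ g = 1

/-- Invariance of a character of the commutator subgroup under conjugation by `G`. -/
def NuInvariant (ν : ↥(commutator G) →* ℂˣ) : Prop :=
  ∀ (γ : G) (x y : ↥(commutator G)), (y : G) = γ * (x : G) * γ⁻¹ → ν y = ν x

/-- The kernel of a character of the commutator subgroup, as a subset of `G`. -/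
def nuKer (ν : ↥(commutator G) →* ℂˣ) : Set G :=
  {g : G | ∃ h : g ∈ commutator G, ν ⟨g, h⟩ = 1}

/-- The preimage in `G` of the center of `G / ker ν`: the set of `g ∈ G` all of whose
commutators with elements of `G` lie in `ker ν`. -/
def centerPreimage (ν : ↥(commutator G) →* ℂˣ) : Set G :=
  {g : G | ∀ x : G, g * x * g⁻¹ * x⁻¹ ∈ nuKer G ν}

/-- `ν̃` is a homomorphism on the preimage of the center extending `ν`. -/
def IsCentralExtensionOf (ν : ↥(commutator G) →* ℂˣ) (ν' : G → ℂˣ) : Prop :=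
  (∀ x ∈ centerPreimage G ν, ∀ y ∈ centerPreimage G ν, ν' (x * y) = ν' x * ν' y) ∧
    ∀ x : ↥(commutator G), ν' (x : G) = ν x

/-- The representation `ρ` induces the pair `(ν, ν̃)`: it acts by the scalar `ν` on the
commutator subgroup and by the scalar `ν̃` on the preimage of the center. -/
def Induces (ρ : IrrRep G) (ν : ↥(commutator G) →* ℂˣ) (ν' : G → ℂˣ) : Prop :=
  (∀ x : ↥(commutator G), ρ.ρ (x : G) = ((ν x : ℂˣ) : ℂ) • LinearMap.id) ∧
    ∀ g ∈ centerPreimage G ν, ρ.ρ g = ((ν' g : ℂˣ) : ℂ) • LinearMap.id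

/-- Isomorphism of bundled representations. -/
def RepIso (ρ₁ ρ₂ : IrrRep G) : Prop :=
  ∃ e : ρ₁.carrier ≃ₗ[ℂ] ρ₂.carrier, ∀ (g : G) (v : ρ₁.carrier),
    e (ρ₁.ρ g v) = ρ₂.ρ g (e v)

/-!
A Heisenberg representation `ρ` kills every commutator `⁅γ, x⁆` with `x ∈ ⁅Γ, Γ⁆`, so `ρ x`
commutes with `ρ Γ` and is a scalar `ν x` by Schur's lemma. For `g` in the preimage `C` of the
center of `Γ ⧸ ker ν`, the commutators `⁅γ, g⁆` lie in `ker ν` and act trivially, so `ρ g` is a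
scalar `ν̃ g` as well.

Conversely, given `(ν, ν̃)`, the conjugation invariance of `ν̃` on `C` makes `C` act by `ν̃` on
the whole representation coinduced from the character `ν̃` of `C`; any irreducible
subrepresentation of it realises `(ν, ν̃)`. Two Heisenberg representations realising the same
pair are isomorphic by orthogonality of characters: if `g ∉ C`, some `x` has
`x g x⁻¹ = k g` with `ν k ≠ 1`, so both characters vanish at `g`, while on `C` they equal
`d ν̃`, whence `∑ χ₂(g) χ₁(g⁻¹) = |C| d₁ d₂ ≠ 0`.
-/

open scoped commutatorElement

theorem commute_of_map_commutatorElement_eq_one {G M : Type*} [Group G] [Monoid M] (f : G →* M)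
    {a b : G} (h : f ⁅a, b⁆ = 1) : Commute (f a) (f b) := by
  have hab : a * b = ⁅a, b⁆ * (b * a) := by group
  calc f a * f b = f ⁅a, b⁆ * (f b * f a) := by rw [← map_mul, hab, map_mul, map_mul]
    _ = f b * f a := by rw [h, one_mul]

namespace Representation

section Scalar

variable {k G V : Type*} [Field k] [Group G] [AddCommGroup V] [Module k V]
  {ρ : Representation k G V}

theorem smul_id_injective [Nontrivial V] :
    Function.Injective fun c : k => c • (LinearMap.id : V →ₗ[k] V) :=
  smul_left_injective k (one_ne_zero (α := Module.End k V))

theorem units_eq_of_eq_smul_id [Nontrivial V] {g : G} {c d : kˣ}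
    (hc : ρ g = (c : k) • LinearMap.id) (hd : ρ g = (d : k) • LinearMap.id) : c = d :=
  Units.ext (smul_id_injective (hc.symm.trans hd))

theorem map_inv_eq_smul_id {g : G} {c : kˣ} (h : ρ g = (c : k) • LinearMap.id) :
    ρ g⁻¹ = ((c⁻¹ : kˣ) : k) • LinearMap.id := by
  calc ρ g⁻¹ = ((c⁻¹ : kˣ) : k) • (ρ g⁻¹ * ((c : k) • LinearMap.id)) := by
        rw [mul_smul_comm, smul_smul, Units.inv_mul, one_smul]; rfl
    _ = ((c⁻¹ : kˣ) : k) • LinearMap.id := by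
        rw [← h, ← map_mul, inv_mul_cancel, map_one]; rfl

theorem map_conj_eq_smul_id {g : G} {c : k} (h : ρ g = c • LinearMap.id) (γ : G) :
    ρ (γ * g * γ⁻¹) = c • LinearMap.id := by
  rw [map_mul, map_mul, h, mul_smul_comm, smul_mul_assoc, ← Module.End.one_eq_id, mul_one,
    ← map_mul, mul_inv_cancel, map_one]

open Classical in
/-- Takes the junk value `1` when `ρ g` is not a nonzero multiple of the identity. -/
noncomputable def scalar (ρ : Representation k G V) (g : G) : kˣ :=
  if h : ∃ c : kˣ, ρ g = (c : k) • LinearMap.id then h.choose else 1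

theorem map_eq_scalar_smul_id {g : G} {c : kˣ} (h : ρ g = (c : k) • LinearMap.id) :
    ρ g = (ρ.scalar g : k) • LinearMap.id := by
  have h' : ∃ c : kˣ, ρ g = (c : k) • LinearMap.id := ⟨c, h⟩
  rw [scalar, dif_pos h']
  exact h'.choose_spec

theorem scalar_eq [Nontrivial V] {g : G} {c : kˣ} (h : ρ g = (c : k) • LinearMap.id) :
    ρ.scalar g = c :=
  units_eq_of_eq_smul_id (map_eq_scalar_smul_id h) h

theorem scalar_mul [Nontrivial V] {a b : G} {c d : kˣ} (ha : ρ a = (c : k) • LinearMap.id)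
    (hb : ρ b = (d : k) • LinearMap.id) : ρ.scalar (a * b) = ρ.scalar a * ρ.scalar b := by
  rw [scalar_eq ha, scalar_eq hb]
  apply scalar_eq
  rw [map_mul, ha, hb, Units.val_mul, smul_mul_smul_comm]
  rfl

variable (ρ) in
noncomputable def scalarHom [Nontrivial V] (H : Subgroup G)
    (hH : ∀ h ∈ H, ∃ c : kˣ, ρ h = (c : k) • LinearMap.id) : H →* kˣ :=
  MonoidHom.mk' (fun h => ρ.scalar h) fun a b => by
    obtain ⟨c, hc⟩ := hH a a.2
    obtain ⟨d, hd⟩ := hH b b.2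
    exact scalar_mul hc hd

theorem map_eq_scalarHom_smul_id [Nontrivial V] {H : Subgroup G}
    (hH : ∀ h ∈ H, ∃ c : kˣ, ρ h = (c : k) • LinearMap.id) (h : H) :
    ρ h = (ρ.scalarHom H hH h : k) • LinearMap.id :=
  map_eq_scalar_smul_id (hH h h.2).choose_spec

theorem character_eq_zero_of_map_conj_eq_smul {g x : G} {c : k} (hc : c ≠ 1)
    (h : ρ (x * g * x⁻¹) = c • ρ g) : ρ.character g = 0 := by
  have key : ρ.character g = c * ρ.character g :=
    calc ρ.character g = ρ.character (x * g * x⁻¹) := (char_conj ρ g x).symm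
      _ = c * ρ.character g := by simp only [character, h, map_smul, smul_eq_mul]
  have : (1 - c) * ρ.character g = 0 := by linear_combination key
  exact (mul_eq_zero.1 this).resolve_left (sub_ne_zero.2 hc.symm)

theorem Equiv.map_eq_smul_id {W : Type*} [AddCommGroup W] [Module k W]
    {σ : Representation k G W} (φ : Equiv ρ σ) {g : G} {c : k} (h : ρ g = c • LinearMap.id) :
    σ g = c • LinearMap.id := by
  rw [← φ.conj_apply_self, h, map_smul, LinearEquiv.conj_id]

end Scalar

section Irreducible

variable {k G V : Type*} [Field k] [Group G] [AddCommGroup V] [Module k V]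
  {ρ : Representation k G V} [IsIrreducible ρ]

include ρ in
theorem IsIrreducible.nontrivial : Nontrivial V :=
  IsSimpleModule.nontrivial (MonoidAlgebra k G) ρ.asModule

variable [IsAlgClosed k] [FiniteDimensional k V]

theorem exists_eq_smul_id_of_forall_commute {T : Module.End k V} (hT : ∀ g, Commute (ρ g) T) :
    ∃ c : k, T = c • LinearMap.id := by
  obtain ⟨c, hc⟩ := IsIrreducible.algebraMap_intertwiningMap_bijective_of_isAlgClosed.2
    (⟨T, fun g => (hT g).eq.symm⟩ : IntertwiningMap ρ ρ)
  exact ⟨c, congrArg IntertwiningMap.toLinearMap hc.symm⟩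

theorem exists_unit_eq_smul_id_of_forall_map_commutatorElement_eq_one {g : G}
    (hg : ∀ y : G, ρ ⁅y, g⁆ = 1) : ∃ c : kˣ, ρ g = (c : k) • LinearMap.id := by
  have := IsIrreducible.nontrivial (ρ := ρ)
  obtain ⟨c, hc⟩ := exists_eq_smul_id_of_forall_commute fun y =>
    commute_of_map_commutatorElement_eq_one ρ (hg y)
  have hc0 : c ≠ 0 := by
    rintro rfl
    have : ρ g * ρ g⁻¹ = 1 := by rw [← map_mul, mul_inv_cancel, map_one]
    rw [hc, zero_smul, zero_mul] at this
    exact zero_ne_one this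
  exact ⟨Units.mk0 c hc0, hc⟩

theorem nonempty_equiv_of_sum_character_ne_zero [CharZero k] [Fintype G] {W : Type*}
    [AddCommGroup W] [Module k W] [FiniteDimensional k W] (σ : Representation k G W)
    [IsIrreducible σ] (h : ∑ g, ρ.character g * σ.character g⁻¹ ≠ 0) :
    Nonempty (Equiv σ ρ) := by
  have hG : (Nat.card G : k) ≠ 0 := Nat.cast_ne_zero.2 Nat.card_pos.ne'
  let := invertibleOfNonzero hG
  by_contra hne
  have := char_orthonormal ρ σ
  rw [if_neg hne] at this
  exact h ((mul_eq_zero.1 this).resolve_left (inv_ne_zero hG))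

end Irreducible

section Subrepresentation

variable {k G V : Type*} [Field k] [Monoid G] [AddCommGroup V] [Module k V]
  {ρ : Representation k G V}

theorem Subrepresentation.isIrreducible_of_minimal {W : Subrepresentation ρ}
    (hW : Minimal (· ≠ ⊥) W) : IsIrreducible W.toRepresentation := by
  let image (S : Subrepresentation W.toRepresentation) : Subrepresentation ρ :=
    ⟨S.toSubmodule.map W.toSubmodule.subtype, by
      rintro g _ ⟨u, hu, rfl⟩
      exact ⟨_, S.apply_mem_toSubmodule g hu, rfl⟩⟩
  have image_le (S) : image S ≤ W := by
    rintro _ ⟨u, -, rfl⟩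
    exact u.2
  have image_eq_bot {S} (h : image S = ⊥) : S = ⊥ :=
    Subrepresentation.toSubmodule_injective <| Submodule.map_injective_of_injective
      W.toSubmodule.injective_subtype <|
        (congrArg Subrepresentation.toSubmodule h).trans (Submodule.map_bot _).symm
  have image_eq_top {S} (h : W ≤ image S) : S = ⊤ := by
    refine eq_top_iff.2 fun u _ => ?_
    obtain ⟨u', hu', hu'u⟩ := h u.2
    rwa [← Subtype.ext hu'u]
  obtain ⟨w, hwW, hw0⟩ := Submodule.exists_mem_ne_zero_of_ne_bot
    (fun h => hW.prop (Subrepresentation.toSubmodule_injective h))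
  refine { exists_pair_ne := ⟨⊥, ⊤, fun h => hw0 ?_⟩, eq_bot_or_eq_top := fun S => ?_ }
  · have : (⟨w, hwW⟩ : W.toSubmodule) ∈ (⊥ : Subrepresentation W.toRepresentation) :=
      h ▸ Submodule.mem_top
    exact congrArg Subtype.val ((Submodule.mem_bot k).1 this)
  · by_cases hS : image S = ⊥
    · exact Or.inl (image_eq_bot hS)
    · exact Or.inr (image_eq_top (hW.2 hS (image_le S)))

variable (ρ) in
theorem exists_isIrreducible_subrepresentation [FiniteDimensional k V] [Nontrivial V] :
    ∃ W : Subrepresentation ρ, IsIrreducible W.toRepresentation := by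
  have : WellFoundedLT (Subrepresentation ρ) :=
    StrictMono.wellFoundedLT (f := Subrepresentation.toSubmodule) fun _ _ h => h
  obtain ⟨W, hW⟩ := exists_minimal_of_wellFoundedLT (· ≠ (⊥ : Subrepresentation ρ))
    ⟨⊤, fun h => top_ne_bot (congrArg Subrepresentation.toSubmodule h)⟩
  exact ⟨W, Subrepresentation.isIrreducible_of_minimal hW⟩

end Subrepresentation

end Representation

open Representation

namespace IrrRep

variable {G}

instance isIrreducible (ρ : IrrRep G) : IsIrreducible ρ.ρ where
  exists_pair_ne := by
    obtain ⟨v, hv⟩ := ρ.nontrivial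
    refine ⟨⊥, ⊤, fun h => hv ?_⟩
    have : v ∈ (⊥ : Subrepresentation ρ.ρ) := h ▸ Submodule.mem_top
    exact (Submodule.mem_bot ℂ).1 this
  eq_bot_or_eq_top S := (ρ.irreducible S.toSubmodule S.apply_mem_toSubmodule).imp
    (fun h => Subrepresentation.toSubmodule_injective h)
    (fun h => Subrepresentation.toSubmodule_injective h)

instance (ρ : IrrRep G) : Nontrivial ρ.carrier := IsIrreducible.nontrivial (ρ := ρ.ρ)

def of {V : Type} [AddCommGroup V] [Module ℂ V] [FiniteDimensional ℂ V]
    (σ : Representation ℂ G V) [IsIrreducible σ] : IrrRep G where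
  carrier := V
  ρ := σ
  nontrivial := have := IsIrreducible.nontrivial (ρ := σ); exists_ne 0
  irreducible W hW := (eq_bot_or_eq_top (⟨W, hW⟩ : Subrepresentation σ)).imp
    (congrArg Subrepresentation.toSubmodule) (congrArg Subrepresentation.toSubmodule)

theorem repIso_iff_nonempty_equiv (ρ₁ ρ₂ : IrrRep G) :
    RepIso G ρ₁ ρ₂ ↔ Nonempty (Representation.Equiv ρ₁.ρ ρ₂.ρ) :=
  ⟨fun ⟨e, he⟩ => ⟨.mk e fun g => LinearMap.ext (he g)⟩,
    fun ⟨φ⟩ => ⟨φ.toLinearEquiv, φ.toIntertwiningMap.isIntertwining⟩⟩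

theorem exists_forall_eq_smul_id {V : Type} [AddCommGroup V] [Module ℂ V]
    [FiniteDimensional ℂ V] [Nontrivial V] (σ : Representation ℂ G V) {S : Set G} {χ : G → ℂ}
    (h : ∀ g ∈ S, σ g = χ g • LinearMap.id) :
    ∃ ρ : IrrRep G, ∀ g ∈ S, ρ.ρ g = χ g • LinearMap.id := by
  obtain ⟨W, hW⟩ := exists_isIrreducible_subrepresentation σ
  refine ⟨of W.toRepresentation, fun g hg => LinearMap.ext fun (u : W.toSubmodule) => ?_⟩
  exact Subtype.ext (show σ g u = χ g • (u : V) by rw [h g hg]; rfl)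

end IrrRep

section CommutatorCharacter

variable {G} {ν : ↥(commutator G) →* ℂˣ}

theorem commutatorElement_mem_commutator (a b : G) : ⁅a, b⁆ ∈ commutator G :=
  Subgroup.commutator_mem_commutator (Subgroup.mem_top a) (Subgroup.mem_top b)

theorem mem_nuKer_iff {g : G} : g ∈ nuKer G ν ↔ g ∈ ν.ker.map (commutator G).subtype :=
  ⟨fun ⟨hg, h⟩ => ⟨⟨g, hg⟩, h, rfl⟩, fun ⟨x, hx, hxg⟩ => hxg ▸ ⟨x.2, hx⟩⟩

theorem commutatorElement_mem_nuKer_of_mem_centerPreimage {g : G}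
    (hg : g ∈ centerPreimage G ν) (y : G) : ⁅y, g⁆ ∈ nuKer G ν := by
  rw [mem_nuKer_iff, ← commutatorElement_inv]
  exact inv_mem (mem_nuKer_iff.1 (hg y))

namespace NuInvariant

variable (hν : NuInvariant G ν)
include hν

theorem normal_ker_map : (ν.ker.map (commutator G).subtype).Normal where
  conj_mem := by
    rintro _ ⟨x, hx, rfl⟩ γ
    have hc : γ * x * γ⁻¹ ∈ commutator G := (Subgroup.commutator_normal ⊤ ⊤).conj_mem _ x.2 γ
    exact ⟨⟨_, hc⟩, (hν γ x ⟨_, hc⟩ rfl).trans hx, rfl⟩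

theorem commutatorElement_mem_nuKer {x : G} (hx : x ∈ commutator G) (γ : G) :
    ⁅γ, x⁆ ∈ nuKer G ν := by
  have hc : γ * x * γ⁻¹ ∈ commutator G := (Subgroup.commutator_normal ⊤ ⊤).conj_mem x hx γ
  refine ⟨mul_mem hc (inv_mem hx), ?_⟩
  change ν (⟨_, hc⟩ * (⟨x, hx⟩ : commutator G)⁻¹) = 1
  rw [map_mul, hν γ ⟨x, hx⟩ ⟨_, hc⟩ rfl, map_inv, mul_inv_cancel]

def centerSubgroup : Subgroup G :=
  have := hν.normal_ker_map
  Subgroup.upperCentralSeriesStep (ν.ker.map (commutator G).subtype)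

theorem mem_centerSubgroup {g : G} : g ∈ hν.centerSubgroup ↔ g ∈ centerPreimage G ν :=
  forall_congr' fun _ => mem_nuKer_iff.symm

theorem normal_centerSubgroup : hν.centerSubgroup.Normal := by
  have := hν.normal_ker_map
  rw [centerSubgroup, Subgroup.upperCentralSeriesStep_eq_comap_center]
  infer_instance

theorem commutator_le_centerSubgroup : commutator G ≤ hν.centerSubgroup := fun x hx γ => by
  rw [← commutatorElement_inv]
  exact inv_mem (mem_nuKer_iff.1 (hν.commutatorElement_mem_nuKer hx γ))

theorem commutator_top_commutator_le :
    ⁅(⊤ : Subgroup G), commutator G⁆ ≤ ν.ker.map (commutator G).subtype :=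
  Subgroup.commutator_le.2 fun γ _ _ hx => mem_nuKer_iff.1 (hν.commutatorElement_mem_nuKer hx γ)

end NuInvariant

end CommutatorCharacter

section Scalars

variable {G} {ν : ↥(commutator G) →* ℂˣ}

theorem IsHeisenbergRep.exists_unit_eq_smul_id {ρ : IrrRep G} (hH : IsHeisenbergRep G ρ) {x : G}
    (hx : x ∈ commutator G) : ∃ c : ℂˣ, ρ.ρ x = (c : ℂ) • LinearMap.id :=
  exists_unit_eq_smul_id_of_forall_map_commutatorElement_eq_one fun y =>
    hH _ (Subgroup.commutator_mem_commutator (Subgroup.mem_top y) hx)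

noncomputable def IsHeisenbergRep.nu {ρ : IrrRep G} (hH : IsHeisenbergRep G ρ) :
    ↥(commutator G) →* ℂˣ :=
  scalarHom ρ.ρ (commutator G) fun _ => hH.exists_unit_eq_smul_id

theorem IsHeisenbergRep.map_eq_nu_smul_id {ρ : IrrRep G} (hH : IsHeisenbergRep G ρ)
    (x : ↥(commutator G)) : ρ.ρ (x : G) = (hH.nu x : ℂ) • LinearMap.id :=
  map_eq_scalarHom_smul_id _ x

namespace IrrRep

variable (ρ : IrrRep G)
  (hν : ∀ x : ↥(commutator G), ρ.ρ (x : G) = ((ν x : ℂˣ) : ℂ) • LinearMap.id)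
include hν

theorem nuInvariant : NuInvariant G ν := fun γ x y hy =>
  units_eq_of_eq_smul_id (hν y) (hy ▸ map_conj_eq_smul_id (hν x) γ)

theorem map_eq_one_of_mem_nuKer {k : G} (hk : k ∈ nuKer G ν) : ρ.ρ k = 1 := by
  obtain ⟨hk, h⟩ := hk
  rw [hν ⟨k, hk⟩, h, Units.val_one, one_smul]
  rfl

theorem isHeisenbergRep_of_forall_eq_smul_id : IsHeisenbergRep G ρ := fun _ hg =>
  ρ.map_eq_one_of_mem_nuKer hν <| mem_nuKer_iff.2 <|
    (ρ.nuInvariant hν).commutator_top_commutator_le hg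

theorem exists_unit_eq_smul_id_of_mem_centerPreimage {g : G} (hg : g ∈ centerPreimage G ν) :
    ∃ c : ℂˣ, ρ.ρ g = (c : ℂ) • LinearMap.id :=
  exists_unit_eq_smul_id_of_forall_map_commutatorElement_eq_one fun y =>
    ρ.map_eq_one_of_mem_nuKer hν (commutatorElement_mem_nuKer_of_mem_centerPreimage hg y)

theorem induces_scalar : Induces G ρ ν (scalar ρ.ρ) :=
  ⟨hν, fun _ hg =>
    map_eq_scalar_smul_id (ρ.exists_unit_eq_smul_id_of_mem_centerPreimage hν hg).choose_spec⟩

theorem isCentralExtensionOf_scalar : IsCentralExtensionOf G ν (scalar ρ.ρ) := by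
  refine ⟨fun x hx y hy => ?_, fun x => scalar_eq (hν x)⟩
  obtain ⟨c, hc⟩ := ρ.exists_unit_eq_smul_id_of_mem_centerPreimage hν hx
  obtain ⟨d, hd⟩ := ρ.exists_unit_eq_smul_id_of_mem_centerPreimage hν hy
  exact scalar_mul hc hd

end IrrRep

end Scalars

namespace IsCentralExtensionOf

variable {G} {ν : ↥(commutator G) →* ℂˣ} {ν' : G → ℂˣ}

theorem eq_one_of_mem_nuKer (hν' : IsCentralExtensionOf G ν ν') {k : G} (hk : k ∈ nuKer G ν) :
    ν' k = 1 :=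
  (hν'.2 ⟨k, hk.1⟩).trans hk.2

variable (hν : NuInvariant G ν) (hν' : IsCentralExtensionOf G ν ν')
include hν hν'

theorem map_conj {c : G} (hc : c ∈ centerPreimage G ν) (y : G) : ν' (y * c * y⁻¹) = ν' c := by
  have hk := commutatorElement_mem_nuKer_of_mem_centerPreimage hc y
  have hkC : ⁅y, c⁆ ∈ centerPreimage G ν :=
    hν.mem_centerSubgroup.1 (hν.commutator_le_centerSubgroup hk.1)
  calc ν' (y * c * y⁻¹) = ν' (⁅y, c⁆ * c) := by rw [commutatorElement_def]; group
    _ = ν' c := by rw [hν'.1 _ hkC _ hc, hν'.eq_one_of_mem_nuKer hk, one_mul]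

noncomputable def toRepresentation : Representation ℂ hν.centerSubgroup ℂ :=
  (algebraMap ℂ (Module.End ℂ ℂ) : ℂ →* Module.End ℂ ℂ).comp <| (Units.coeHom ℂ).comp <|
    MonoidHom.mk' (fun c => ν' c) fun a b =>
      hν'.1 _ (hν.mem_centerSubgroup.1 a.2) _ (hν.mem_centerSubgroup.1 b.2)

theorem mem_coindV_toRepresentation {f : G → ℂ} :
    f ∈ coindV hν.centerSubgroup.subtype (hν'.toRepresentation hν) ↔
      ∀ c ∈ hν.centerSubgroup, ∀ y, f (c * y) = ν' c * f y :=
  ⟨fun hf c hc => hf ⟨c, hc⟩, fun hf c => hf c c.2⟩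

theorem coind_toRepresentation_eq_smul_id {c : G} (hc : c ∈ centerPreimage G ν) :
    coind hν.centerSubgroup.subtype (hν'.toRepresentation hν) c = (ν' c : ℂ) • LinearMap.id := by
  ext f y
  have hf := (hν'.mem_coindV_toRepresentation hν).1 f.2 _
    (hν.normal_centerSubgroup.conj_mem c (hν.mem_centerSubgroup.2 hc) y) y
  rw [inv_mul_cancel_right, hν'.map_conj hν hc] at hf
  exact hf

theorem nontrivial_coindV :
    Nontrivial (coindV hν.centerSubgroup.subtype (hν'.toRepresentation hν)) := by
  classical
  let C := hν.centerSubgroup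
  let f₀ : G → ℂ := fun g => if g ∈ C then (ν' g : ℂ) else 0
  have hf₀ : f₀ ∈ coindV C.subtype (hν'.toRepresentation hν) := by
    refine (hν'.mem_coindV_toRepresentation hν).2 fun c hc y => ?_
    simp only [f₀, Subgroup.mul_mem_cancel_left C hc]
    split_ifs with hy
    · rw [hν'.1 _ (hν.mem_centerSubgroup.1 hc) _ (hν.mem_centerSubgroup.1 hy), Units.val_mul]
    · rw [mul_zero]
  refine nontrivial_of_ne ⟨f₀, hf₀⟩ 0 fun h => (ν' 1).ne_zero ?_
  simpa [f₀, C.one_mem] using congrFun (congrArg Subtype.val h) 1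

theorem exists_irrRep [Finite G] :
    ∃ ρ : IrrRep G, ∀ g ∈ centerPreimage G ν, ρ.ρ g = (ν' g : ℂ) • LinearMap.id :=
  have := hν'.nontrivial_coindV hν
  IrrRep.exists_forall_eq_smul_id _ fun _ => hν'.coind_toRepresentation_eq_smul_id hν

theorem induces {ρ : IrrRep G}
    (h : ∀ g ∈ centerPreimage G ν, ρ.ρ g = (ν' g : ℂ) • LinearMap.id) : Induces G ρ ν ν' :=
  ⟨fun x => by
    rw [h x (hν.mem_centerSubgroup.1 (hν.commutator_le_centerSubgroup x.2)), hν'.2 x], h⟩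

end IsCentralExtensionOf

namespace Induces

variable {G} {ν : ↥(commutator G) →* ℂˣ} {ν' : G → ℂˣ} {ρ : IrrRep G}

theorem of_equiv {ρ₂ : IrrRep G} (h : Induces G ρ ν ν') (φ : Representation.Equiv ρ.ρ ρ₂.ρ) :
    Induces G ρ₂ ν ν' :=
  ⟨fun x => φ.map_eq_smul_id (h.1 x), fun g hg => φ.map_eq_smul_id (h.2 g hg)⟩

theorem character_eq_zero (h : Induces G ρ ν ν') {g : G} (hg : g ∉ centerPreimage G ν) :
    character ρ.ρ g = 0 := by
  obtain ⟨x, hx⟩ : ∃ x, ⁅g, x⁆ ∉ nuKer G ν := by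
    simpa [centerPreimage, commutatorElement_def] using hg
  set k : ↥(commutator G) := ⟨⁅g, x⁆, commutatorElement_mem_commutator g x⟩
  have hk : ν k ≠ 1 := fun h1 => hx ⟨k.2, h1⟩
  refine character_eq_zero_of_map_conj_eq_smul (x := x) (c := (((ν k)⁻¹ : ℂˣ) : ℂ)) ?_ ?_
  · exact fun h1 => hk (inv_eq_one.1 (Units.ext h1))
  · have hconj : x * g * x⁻¹ = (k : G)⁻¹ * g := by
      simp only [k, commutatorElement_def]; group
    rw [hconj, map_mul, map_inv_eq_smul_id (h.1 k), smul_mul_assoc, ← Module.End.one_eq_id,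
      one_mul]

theorem character_eq (h : Induces G ρ ν ν') {g : G} (hg : g ∈ centerPreimage G ν) :
    character ρ.ρ g = (Module.finrank ℂ ρ.carrier : ℂ) * ν' g := by
  simp only [character, h.2 g hg, map_smul, LinearMap.trace_id, smul_eq_mul, mul_comm]

theorem character_inv_eq (h : Induces G ρ ν ν') {g : G} (hg : g ∈ centerPreimage G ν) :
    character ρ.ρ g⁻¹ = (Module.finrank ℂ ρ.carrier : ℂ) * ((ν' g)⁻¹ : ℂˣ) := by
  simp only [character, map_inv_eq_smul_id (h.2 g hg), map_smul, LinearMap.trace_id, smul_eq_mul,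
    mul_comm]

theorem repIso [Finite G] {ρ₂ : IrrRep G} (h₁ : Induces G ρ ν ν') (h₂ : Induces G ρ₂ ν ν') :
    RepIso G ρ ρ₂ := by
  classical
  cases nonempty_fintype G
  rw [IrrRep.repIso_iff_nonempty_equiv]
  apply nonempty_equiv_of_sum_character_ne_zero
  have hterm (g : G) : character ρ₂.ρ g * character ρ.ρ g⁻¹ =
      if g ∈ centerPreimage G ν then
        (Module.finrank ℂ ρ₂.carrier * Module.finrank ℂ ρ.carrier : ℂ) else 0 := by
    split_ifs with hg
    · rw [h₂.character_eq hg, h₁.character_inv_eq hg, Units.val_inv_eq_inv_val]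
      field_simp
    · rw [h₂.character_eq_zero hg, zero_mul]
  have h1 : (1 : G) ∈ centerPreimage G ν :=
    (ρ.nuInvariant h₁.1).mem_centerSubgroup.1 (one_mem _)
  rw [Finset.sum_congr rfl fun g _ => hterm g, Finset.sum_ite, Finset.sum_const_zero, add_zero,
    Finset.sum_const, nsmul_eq_mul]
  exact mul_ne_zero (Nat.cast_ne_zero.2 (Finset.card_ne_zero.2 ⟨1, by simpa using h1⟩))
    (mul_ne_zero (Nat.cast_ne_zero.2 Module.finrank_pos.ne')
      (Nat.cast_ne_zero.2 Module.finrank_pos.ne'))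

end Induces

/-- Classification of Heisenberg representations of a finite group `Γ`:
(a) a Heisenberg representation acts on `⁅Γ,Γ⁆` by a unique scalar character `ν`, which
is invariant under conjugation; (b) it acts by a unique scalar character `ν̃` on the
preimage `C_ρ` of the center of `Γ/ker ν`, and `ν̃` is a homomorphism there extending
`ν`; (c) the assignment `ρ ↦ (ν, ν̃)` induces a bijection from isomorphism classes of
Heisenberg representations onto the set `S(Γ)` of pairs `(ν, ν̃)` of this shape. -/
theorem heisenberg_classification [Finite G] :
    (∀ ρ : IrrRep G, IsHeisenbergRep G ρ →
      (∃! ν : ↥(commutator G) →* ℂˣ,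
        ∀ x : ↥(commutator G), ρ.ρ (x : G) = ((ν x : ℂˣ) : ℂ) • LinearMap.id) ∧
      (∀ ν : ↥(commutator G) →* ℂˣ,
        (∀ x : ↥(commutator G), ρ.ρ (x : G) = ((ν x : ℂˣ) : ℂ) • LinearMap.id) →
        NuInvariant G ν) ∧
      (∀ ν : ↥(commutator G) →* ℂˣ,
        (∀ x : ↥(commutator G), ρ.ρ (x : G) = ((ν x : ℂˣ) : ℂ) • LinearMap.id) →
        ∃ ν' : G → ℂˣ,
          (∀ g ∈ centerPreimage G ν, ρ.ρ g = ((ν' g : ℂˣ) : ℂ) • LinearMap.id) ∧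
          IsCentralExtensionOf G ν ν' ∧
          ∀ ν'' : G → ℂˣ,
            (∀ g ∈ centerPreimage G ν, ρ.ρ g = ((ν'' g : ℂˣ) : ℂ) • LinearMap.id) →
            ∀ g ∈ centerPreimage G ν, ν'' g = ν' g)) ∧
    (∀ (ν : ↥(commutator G) →* ℂˣ) (ν' : G → ℂˣ),
      NuInvariant G ν → IsCentralExtensionOf G ν ν' →
      ∃ ρ : IrrRep G, IsHeisenbergRep G ρ ∧ Induces G ρ ν ν') ∧
    (∀ ρ₁ ρ₂ : IrrRep G, IsHeisenbergRep G ρ₁ → IsHeisenbergRep G ρ₂ →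
      (RepIso G ρ₁ ρ₂ ↔
        ∃ (ν : ↥(commutator G) →* ℂˣ) (ν' : G → ℂˣ),
          Induces G ρ₁ ν ν' ∧ Induces G ρ₂ ν ν')) := by
  refine ⟨fun ρ hH => ?_, fun ν ν' hν hν' => ?_, fun ρ₁ ρ₂ hH₁ _ => ⟨fun hiso => ?_, ?_⟩⟩
  · refine ⟨⟨hH.nu, hH.map_eq_nu_smul_id,
        fun ν₂ hν₂ => MonoidHom.ext fun x => (scalar_eq (hν₂ x)).symm⟩,
      fun ν hν => ρ.nuInvariant hν, fun ν hν => ⟨scalar ρ.ρ, (ρ.induces_scalar hν).2,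
        ρ.isCentralExtensionOf_scalar hν, fun ν'' hν'' g hg => (scalar_eq (hν'' g hg)).symm⟩⟩
  · obtain ⟨ρ, hρ⟩ := hν'.exists_irrRep hν
    have h := hν'.induces hν hρ
    exact ⟨ρ, ρ.isHeisenbergRep_of_forall_eq_smul_id h.1, h⟩
  · obtain ⟨φ⟩ := (IrrRep.repIso_iff_nonempty_equiv ρ₁ ρ₂).1 hiso
    have h := ρ₁.induces_scalar hH₁.map_eq_nu_smul_id
    exact ⟨_, _, h, h.of_equiv φ⟩
  · rintro ⟨ν, ν', h₁, h₂⟩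
    exact h₁.repIso h₂
end

section
/- Let S ⊆ ℕ be a subset of density 1. Then the functions S → ℂ given by n ↦ λ^n, for λ ranging over ℂ \ {0}, are linearly independent over ℂ: for every finite nonempty set Λ ⊆ ℂ \ {0} and every function c : Λ → ℂ, if Σ_{λ ∈ Λ} c(λ)·λ^n = 0 for all n ∈ S, then c(λ) = 0 for all λ ∈ Λ. -/
/-!
If `S` had no run of `k` consecutive integers, each of the blocks `[ik + 1, ik + k]` would
miss `S`, so `S` would have upper density at most `1 - 1/k`. Hence a density-one set contains
`n, n + 1, …, n + |Λ| - 1` for some `n`, and the vanishing of `∑ c(λ) λⁿ λʲ` for `j < |Λ|` forces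
every `c(λ) λⁿ` to vanish by the invertibility of the Vandermonde matrix of `Λ`.
-/

open Filter

theorem Finset.eq_zero_of_forall_sum_mul_pow_eq_zero {R : Type*} [CommRing R] [IsDomain R]
    (s : Finset R) (a : R → R) (h : ∀ j < s.card, ∑ x ∈ s, a x * x ^ j = 0) :
    ∀ x ∈ s, a x = 0 := by
  set e := s.equivFin
  have hv : (fun i => a (e.symm i)) = 0 := by
    refine Matrix.eq_zero_of_forall_pow_sum_mul_pow_eq_zero (f := fun i => (e.symm i : R))
      (Subtype.val_injective.comp e.symm.injective) fun j => ?_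
    have := h j j.isLt
    rwa [← Finset.sum_coe_sort s, ← e.symm.sum_comp] at this
  intro x hx
  simpa using congrFun hv (e ⟨x, hx⟩)

theorem Set.ncard_inter_Icc_add_le_of_forall_exists_not_mem {S : Set ℕ} {k : ℕ}
    (hS : ∀ n, ∃ j < k, n + j ∉ S) (M : ℕ) :
    (S ∩ Set.Icc 1 (M * k)).ncard + M ≤ M * k := by
  choose f hfk hfS using hS
  set g : ℕ → ℕ := fun i => i * k + 1 + f (i * k + 1)
  have hg_mono : StrictMono g := fun i j hij => by
    have : (i + 1) * k ≤ j * k := Nat.mul_le_mul_right k hij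
    have := hfk (i * k + 1)
    simp only [g]; nlinarith
  have hg_mem : ∀ i ∈ Set.Iio M, g i ∈ Set.Icc 1 (M * k) \ S := fun i hi => by
    have : (i + 1) * k ≤ M * k := Nat.mul_le_mul_right k hi
    have := hfk (i * k + 1)
    simp only [g]
    exact ⟨⟨by omega, by nlinarith⟩, hfS _⟩
  have hM : M ≤ (Set.Icc 1 (M * k) \ S).ncard := by
    simpa using Set.ncard_le_ncard_of_injOn g hg_mem hg_mono.injective.injOn
  have hsplit := Set.ncard_inter_add_ncard_sdiff_eq_ncard (Set.Icc 1 (M * k)) S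
  rw [Set.inter_comm, Set.ncard_Icc_nat, add_tsub_cancel_right] at hsplit
  omega

theorem exists_forall_add_mem_of_tendsto_ncard_inter_Icc_div {S : Set ℕ}
    (hS : Tendsto (fun N : ℕ => ((S ∩ Set.Icc 1 N).ncard : ℝ) / (N : ℝ)) atTop (nhds 1))
    (k : ℕ) : ∃ n, ∀ j < k, n + j ∈ S := by
  rcases k.eq_zero_or_pos with rfl | hk
  · exact ⟨0, by simp⟩
  by_contra! H
  have hk' : (0 : ℝ) < k := by exact_mod_cast hk
  have hsubseq := hS.comp (tendsto_id.atTop_mul_const' hk)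
  have hle : ∀ᶠ M : ℕ in atTop,
      ((S ∩ Set.Icc 1 (M * k)).ncard : ℝ) / ((M * k : ℕ) : ℝ) ≤ 1 - 1 / k := by
    filter_upwards [eventually_ge_atTop 1] with M hM
    have hM' : (1 : ℝ) ≤ M := by exact_mod_cast hM
    have hcount : ((S ∩ Set.Icc 1 (M * k)).ncard : ℝ) + M ≤ M * k := by
      exact_mod_cast Set.ncard_inter_Icc_add_le_of_forall_exists_not_mem H M
    rw [Nat.cast_mul, div_le_iff₀ (by positivity)]
    field_simp
    linarith
  have hlim := le_of_tendsto hsubseq hle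
  have hk_inv : (0 : ℝ) < 1 / k := by positivity
  linarith

theorem linearIndependent_characters_on_density_one_set_general
    (S : Set ℕ)
    (hS : Tendsto (fun N : ℕ => ((S ∩ Set.Icc 1 N).ncard : ℝ) / (N : ℝ))
      atTop (nhds 1))
    (Λ : Finset ℂ) (h0 : (0 : ℂ) ∉ Λ)
    (c : ℂ → ℂ)
    (hvanish : ∀ n ∈ S, ∑ l ∈ Λ, c l * l ^ n = 0) :
    ∀ l ∈ Λ, c l = 0 := by
  obtain ⟨n, hn⟩ := exists_forall_add_mem_of_tendsto_ncard_inter_Icc_div hS Λ.card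
  have hshift : ∀ l ∈ Λ, c l * l ^ n = 0 :=
    Λ.eq_zero_of_forall_sum_mul_pow_eq_zero (fun l => c l * l ^ n) fun j hj => by
      simpa only [pow_add, mul_assoc] using hvanish (n + j) (hn j hj)
  intro l hl
  exact (mul_eq_zero.mp (hshift l hl)).resolve_right (pow_ne_zero n (ne_of_mem_of_not_mem hl h0))

/-- If `S ⊆ ℕ` has density `1`, then the functions `n ↦ λ^n` on `S`, for nonzero `λ ∈ ℂ`,
are linearly independent over `ℂ`. -/
theorem linearIndependent_characters_on_density_one_set
    (S : Set ℕ)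
    (hS : Tendsto (fun N : ℕ => ((S ∩ Set.Icc 1 N).ncard : ℝ) / (N : ℝ))
      atTop (nhds 1))
    (Λ : Finset ℂ) (hne : Λ.Nonempty) (h0 : (0 : ℂ) ∉ Λ)
    (c : ℂ → ℂ)
    (hvanish : ∀ n ∈ S, ∑ l ∈ Λ, c l * l ^ n = 0) :
    ∀ l ∈ Λ, c l = 0 :=
  linearIndependent_characters_on_density_one_set_general S hS Λ h0 c hvanish
end

section
/- Let s ≥ 2 be an integer and q = 2^s. There do not exist a finite nonempty set Λ ⊆ ℂ \ {0} and a function k : Λ → ℤ with k(λ) ≠ 0 for all λ ∈ Λ, such that the function F(n) := Σ_{λ ∈ Λ} k(λ)·λ^n satisfies F(1) = q/2 and, for every integer n ≥ 2, F(n) ∈ {q^n, q^n/2, 1}. -/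
/-!
Pass to an arithmetic progression `n = 1 + m j`, where `m` kills the torsion of the group
generated by `Λ ∪ {q}`: the frequencies `λ ^ m`, `q ^ m` then lie in a finitely generated
torsion-free group `B ≤ ℂˣ`, and the exponential sums with frequencies in `B` form a ring
isomorphic to the group algebra `ℂ[B]`, which has no zero divisors. The product
`(2F - q^n)(F - q^n)(F - 1)` vanishes along the progression, so one factor vanishes
identically. Evaluating at `j = 0` rules out the last two (they force `q = 0` or `q = 2`). If
`2F(1 + m j) = q^(1 + m j)` for all `j`, comparing the coefficients of the frequency `q ^ m`
gives `∑ k(λ) (λ / q) = 1 / 2` with each `λ / q` a root of unity, but `1 / 2` is not an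
algebraic integer.
-/

open Finset MonoidAlgebra

theorem CommGroup.finite_torsion (G : Type*) [CommGroup G] [Group.FG G] :
    Finite (torsion G) := by
  have : Module.Finite ℤ (Additive G) := Module.Finite.iff_addGroup_fg.mpr inferInstance
  have : AddGroup.FG (torsion G).toAddSubgroup := Module.Finite.iff_addGroup_fg.mp
    (inferInstance : Module.Finite ℤ (AddSubgroup.toIntSubmodule (torsion G).toAddSubgroup))
  have : Group.FG (torsion G) := (Group.fg_iff_subgroup_fg _).mpr <|
    (Subgroup.fg_iff_add_fg _).mpr <| (AddGroup.fg_iff_addSubgroup_fg _).mp this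
  exact finite_of_fg_isMulTorsion _ fun g => Submonoid.isOfFinOrder_coe.mp g.2

theorem exists_isMulTorsionFree_closure_image_pow {G : Type*} [CommGroup G] {S : Set G}
    (hS : S.Finite) : ∃ m, 0 < m ∧ IsMulTorsionFree (Subgroup.closure ((· ^ m) '' S)) := by
  have : Finite S := hS
  have := CommGroup.finite_torsion (Subgroup.closure S)
  set m := Nat.card (CommGroup.torsion (Subgroup.closure S))
  refine ⟨m, Nat.card_pos, isMulTorsionFree_iff_not_isOfFinOrder.mpr ?_⟩
  rintro ⟨b, hb⟩ hb1 hfin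
  rw [show ((· ^ m) '' S) = powMonoidHom m '' S from rfl, ← MonoidHom.map_closure] at hb
  obtain ⟨a, ha, rfl⟩ := hb
  have ha_tors : (⟨a, ha⟩ : Subgroup.closure S) ∈ CommGroup.torsion (Subgroup.closure S) := by
    rw [CommGroup.mem_torsion, ← Submonoid.isOfFinOrder_coe]
    exact (isOfFinOrder_pow.mp (Submonoid.isOfFinOrder_coe.mpr hfin)).resolve_right
      Nat.card_pos.ne'
  have ha_pow : (⟨a, ha⟩ : Subgroup.closure S) ^ m = 1 :=
    congrArg Subtype.val (pow_card_eq_one' (x := ⟨_, ha_tors⟩))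
  exact hb1 (Subtype.ext (congrArg Subtype.val ha_pow :))

section ExponentialSums

variable {K : Type*} [CommRing K] [IsDomain K]

theorem linearIndependent_fun_pow : LinearIndependent K (fun (x : K) (n : ℕ) => x ^ n) :=
  .of_comp (LinearMap.funLeft K K Multiplicative.toAdd) <|
    (linearIndependent_monoidHom (Multiplicative ℕ) K).comp _ (powersHom K).injective

theorem sum_filter_eq_of_forall_sum_mul_pow_eq [DecidableEq K] {ι : Type*} {t : Finset ι}
    {c v : ι → K} {a w : K} (h : ∀ n : ℕ, ∑ i ∈ t, c i * v i ^ n = a * w ^ n) :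
    ∑ i ∈ t with v i = w, c i = a := by
  let l : K →₀ K := ∑ i ∈ t, Finsupp.single (v i) (c i) - Finsupp.single w a
  have hl_comb : Finsupp.linearCombination K (fun (x : K) (n : ℕ) => x ^ n) l = 0 := by
    ext n
    simp [l, map_sum, Finsupp.linearCombination_single, h]
  have hl : l = 0 := linearIndependent_iff.mp (linearIndependent_fun_pow (K := K)) l hl_comb
  simpa [l, Finsupp.single_apply, sum_filter, sub_eq_zero] using congrArg (· w) hl

variable {G : Type*} [CommMonoid G] (ι : G →* K)

noncomputable def expSum : MonoidAlgebra K G →ₐ[K] (ℕ → K) :=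
  lift K (ℕ → K) G (MonoidHom.pi fun n => (powMonoidHom n).comp ι)

omit [IsDomain K] in
theorem expSum_single (g : G) (r : K) : expSum ι (single g r) = fun n => r * ι g ^ n := by
  ext n
  simp [expSum, lift_single]

theorem expSum_injective (hι : Function.Injective ι) : Function.Injective (expSum ι) :=
  (injective_iff_map_eq_zero _).mpr fun x hx => congrArg ofCoeff <|
    linearIndependent_iff.mp ((linearIndependent_fun_pow (K := K)).comp ι hι) x.coeff hx

theorem noZeroDivisors_range_expSum [UniqueProds G] (hι : Function.Injective ι) :
    NoZeroDivisors (expSum ι).range :=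
  (AlgEquiv.ofInjective (expSum ι) (expSum_injective ι hι)).symm.toMulEquiv.noZeroDivisors

end ExponentialSums

theorem exists_pow_mem_noZeroDivisors_subalgebra {K : Type*} [Field K] {S : Finset K}
    (hS : 0 ∉ S) :
    ∃ m, 0 < m ∧ ∃ R : Subalgebra K (ℕ → K), NoZeroDivisors R ∧
      ∀ x ∈ S, (fun n => (x ^ m) ^ n) ∈ R := by
  have hfin : (Units.val ⁻¹' (S : Set K)).Finite :=
    S.finite_toSet.preimage Units.val_injective.injOn
  obtain ⟨m, hm, htf⟩ := exists_isMulTorsionFree_closure_image_pow hfin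
  set B := Subgroup.closure ((· ^ m) '' (Units.val ⁻¹' (S : Set K)))
  have : Finite ((· ^ m) '' (Units.val ⁻¹' (S : Set K))) := (hfin.image _).to_subtype
  have hι : Function.Injective ((Units.coeHom K).comp B.subtype) :=
    Units.val_injective.comp Subtype.val_injective
  refine ⟨m, hm, _, noZeroDivisors_range_expSum _ hι, fun x hx => ?_⟩
  have hx0 : x ≠ 0 := ne_of_mem_of_not_mem hx hS
  have hmem : Units.mk0 x hx0 ^ m ∈ B := Subgroup.subset_closure ⟨_, by simpa, rfl⟩
  refine ⟨single ⟨_, hmem⟩ 1, ?_⟩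
  simp [expSum_single]

theorem eq_zero_or_eq_zero_of_mul_eq_zero_of_mem {A S : Type*} [Semiring A] [SetLike S A]
    [SubsemiringClass S A] {R : S} [NoZeroDivisors R] {a b : A} (ha : a ∈ R) (hb : b ∈ R)
    (hab : a * b = 0) : a = 0 ∨ b = 0 := by
  have : (⟨a, ha⟩ * ⟨b, hb⟩ : R) = 0 := Subtype.ext hab
  exact (mul_eq_zero.mp this).imp (congrArg Subtype.val) (congrArg Subtype.val)

section Progression

variable {K : Type*} [CommSemiring K] {R : Subalgebra K (ℕ → K)} {m : ℕ}

theorem pow_add_mul_mem {x : K} (hx : (fun j => (x ^ m) ^ j) ∈ R) (a : ℕ) :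
    (fun j => x ^ (a + m * j)) ∈ R := by
  convert R.smul_mem hx (x ^ a) using 1
  ext j
  simp [pow_add, pow_mul]

theorem sum_mul_pow_add_mul_mem {Λ : Finset K} (hΛ : ∀ x ∈ Λ, (fun j => (x ^ m) ^ j) ∈ R)
    (c : K → K) (a : ℕ) : (fun j => ∑ x ∈ Λ, c x * x ^ (a + m * j)) ∈ R := by
  convert sum_mem fun x hx => R.smul_mem (pow_add_mul_mem (hΛ x hx) a) (c x) using 1
  ext j
  simp

end Progression

theorem sum_int_mul_ne_half {K : Type*} [Field K] [CharZero K] {ι : Type*} (t : Finset ι)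
    (k : ι → ℤ) {ζ : ι → K} {m : ℕ} (hm : 0 < m) (hζ : ∀ i ∈ t, ζ i ^ m = 1) :
    ∑ i ∈ t, (k i : K) * ζ i ≠ 1 / 2 := by
  intro h
  have hint : IsIntegral ℤ (∑ i ∈ t, (k i : K) * ζ i) :=
    IsIntegral.sum _ fun i hi => (isIntegral_algebraMap (x := k i)).mul
      (IsIntegral.of_pow hm (by rw [hζ i hi]; exact isIntegral_one))
  rw [h, show (1 / 2 : K) = algebraMap ℚ K (1 / 2) by simp,
    isIntegral_algebraMap_iff (algebraMap ℚ K).injective] at hint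
  obtain ⟨y, hy⟩ := IsIntegrallyClosed.isIntegral_iff.mp hint
  have : ((2 * y : ℤ) : ℚ) = 1 := by
    push_cast
    rw [← eq_intCast (algebraMap ℤ ℚ), hy]
    norm_num
  have : 2 * y = 1 := by exact_mod_cast this
  omega

theorem not_forall_two_mul_sum_mul_pow_eq_pow {K : Type*} [Field K] [CharZero K]
    (Λ : Finset K) (k : K → ℤ) {q : K} (hq : q ≠ 0) {m : ℕ} (hm : 0 < m) :
    ¬ ∀ j : ℕ, 2 * ∑ l ∈ Λ, (k l : K) * l ^ (1 + m * j) = q ^ (1 + m * j) := by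
  classical
  intro h
  have hcoeff : ∑ l ∈ Λ with l ^ m = q ^ m, 2 * (k l : K) * l = q :=
    sum_filter_eq_of_forall_sum_mul_pow_eq fun j => by
      simpa [mul_sum, pow_add, pow_mul, mul_assoc] using h j
  refine sum_int_mul_ne_half {l ∈ Λ | l ^ m = q ^ m} k (ζ := (· / q)) hm
    (fun l hl => by rw [div_pow, (mem_filter.mp hl).2, div_self (pow_ne_zero _ hq)]) ?_
  calc ∑ l ∈ Λ with l ^ m = q ^ m, (k l : K) * (l / q)
      = (∑ l ∈ Λ with l ^ m = q ^ m, 2 * (k l : K) * l) / (2 * q) := by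
        rw [sum_div]
        exact sum_congr rfl fun l _ => by field_simp
    _ = 1 / 2 := by rw [hcoeff]; field_simp

theorem two_mul_sub_pow_mul_sub_pow_mul_sub_one_eq_zero {K : Type*} [Field K] [CharZero K]
    {F : ℕ → K} {q : K} (h1 : F 1 = q / 2)
    (h : ∀ n, 2 ≤ n → F n = q ^ n ∨ F n = q ^ n / 2 ∨ F n = 1)
    {n : ℕ} (hn : 1 ≤ n) : (2 * F n - q ^ n) * (F n - q ^ n) * (F n - 1) = 0 := by
  obtain rfl | hn := hn.eq_or_lt
  · rw [h1]; ring
  rcases h n hn with hF | hF | hF <;> rw [hF] <;> ring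

/-- For `q = 2^s` with `s ≥ 2`, no finite exponential sum `F(n) = Σ_{λ ∈ Λ} k(λ)·λ^n`
with nonzero complex frequencies `λ` and nonzero integer coefficients `k(λ)` can satisfy
`F(1) = q/2` and `F(n) ∈ {q^n, q^n/2, 1}` for all `n ≥ 2`. -/
theorem no_exponential_sum_interpolating_dimensions (s : ℕ) (hs : 2 ≤ s) :
    ¬ ∃ (Λ : Finset ℂ) (k : ℂ → ℤ),
        Λ.Nonempty ∧ (0 : ℂ) ∉ Λ ∧ (∀ l ∈ Λ, k l ≠ 0) ∧
        (∑ l ∈ Λ, (k l : ℂ) * l ^ (1 : ℕ) = (2 : ℂ) ^ s / 2) ∧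
        (∀ n : ℕ, 2 ≤ n →
          (∑ l ∈ Λ, (k l : ℂ) * l ^ n = ((2 : ℂ) ^ s) ^ n ∨
           ∑ l ∈ Λ, (k l : ℂ) * l ^ n = ((2 : ℂ) ^ s) ^ n / 2 ∨
           ∑ l ∈ Λ, (k l : ℂ) * l ^ n = 1)) := by
  rintro ⟨Λ, k, -, h0, -, h1, hvals⟩
  have hq : (2 : ℂ) ^ s ≠ 0 := pow_ne_zero _ two_ne_zero
  obtain ⟨m, hm, R, hR, hpow⟩ :=
    exists_pow_mem_noZeroDivisors_subalgebra (S := insert ((2 : ℂ) ^ s) Λ)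
      (by simp [h0, hq.symm])
  set F : ℕ → ℂ := fun j => ∑ l ∈ Λ, (k l : ℂ) * l ^ (1 + m * j)
  set Q : ℕ → ℂ := fun j => ((2 : ℂ) ^ s) ^ (1 + m * j)
  have hF : F ∈ R := sum_mul_pow_add_mul_mem (fun l hl => hpow l (mem_insert_of_mem hl)) _ 1
  have hQ : Q ∈ R := pow_add_mul_mem (hpow _ (mem_insert_self _ _)) 1
  have hprod : (2 • F - Q) * (F - Q) * (F - 1) = 0 := by
    ext j
    simp only [Pi.mul_apply, Pi.sub_apply, nsmul_eq_mul, Pi.one_apply, Pi.zero_apply,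
      Nat.cast_ofNat]
    exact two_mul_sub_pow_mul_sub_pow_mul_sub_one_eq_zero h1 hvals (by omega)
  rcases eq_zero_or_eq_zero_of_mul_eq_zero_of_mem (mul_mem (sub_mem (nsmul_mem hF 2) hQ)
    (sub_mem hF hQ)) (sub_mem hF (one_mem R)) hprod with h_pair | h_one
  · rcases eq_zero_or_eq_zero_of_mul_eq_zero_of_mem (sub_mem (nsmul_mem hF 2) hQ)
      (sub_mem hF hQ) h_pair with h_twice | h_pow
    · exact not_forall_two_mul_sum_mul_pow_eq_pow Λ k hq hm fun j => by
        simpa [F, Q, sub_eq_zero] using congrFun h_twice j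
    · have hF1 : ∑ l ∈ Λ, (k l : ℂ) * l ^ 1 = 2 ^ s := by
        simpa [F, Q, sub_eq_zero] using congrFun h_pow 0
      exact hq (by linear_combination 2 * h1 - 2 * hF1)
  · have hF1 : ∑ l ∈ Λ, (k l : ℂ) * l ^ 1 = 1 := by
      simpa [F, sub_eq_zero] using congrFun h_one 0
    have hq2 : (2 : ℂ) ^ s = 2 ^ 1 := by linear_combination 2 * hF1 - 2 * h1
    have := Nat.pow_right_injective le_rfl (by exact_mod_cast hq2 : 2 ^ s = 2 ^ 1)
    omega
end

section
/- Let V be a finite-dimensional vector space over a field k, let B : V × V → k be an alternating bilinear form, and let 0 = V_0 ⊆ V_1 ⊆ ⋯ ⊆ V_n = V be an increasing chain of subspaces with dim_k(V_i/V_{i−1}) ≤ 1 for all 1 ≤ i ≤ n. For each i set K_i := {v ∈ V_i : B(v, w) = 0 for all w ∈ V_i}. Then there is exactly one subspace L ⊆ V such that for every i the intersection L ∩ V_i is a Lagrangian subspace of V_i with respect to the restriction of B, namely L = K_1 + K_2 + ⋯ + K_n; in particular this L is itself Lagrangian in V. -/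
open Module Submodule


/-- `L` is a Lagrangian subspace of the subspace `U` (with respect to the restriction of
the bilinear form `B` to `U`): it is contained in `U`, isotropic, and maximal with respect
to inclusion among the isotropic subspaces contained in `U`. -/
def IsLagrangianIn {k V : Type*} [Field k] [AddCommGroup V] [Module k V]
    (B : V →ₗ[k] V →ₗ[k] k) (U L : Submodule k V) : Prop :=
  L ≤ U ∧ L ≤ orthogonalCompl B L ∧
    ∀ L' : Submodule k V, L' ≤ U → L' ≤ orthogonalCompl B L' → L ≤ L' → L' = L

section helperlemmas

variable {k V : Type*} [Field k] [AddCommGroup V] [Module k V]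
variable {B : V →ₗ[k] V →ₗ[k] k}

lemma mem_orthogonalCompl {v : V} {W : Submodule k V} :
    v ∈ orthogonalCompl B W ↔ ∀ w ∈ W, B v w = 0 := Iff.rfl

lemma orthogonalCompl_antitone {W₁ W₂ : Submodule k V} (h : W₁ ≤ W₂) :
    orthogonalCompl B W₂ ≤ orthogonalCompl B W₁ :=
  fun v hv w hw => hv w (h hw)

lemma skewB (halt : ∀ v : V, B v v = 0) (v w : V) : B v w = - B w v := by
  have h := halt (v + w)
  simp only [map_add, LinearMap.add_apply, halt] at h
  linear_combination h

lemma finrank_dualAnnihilator_add {K E : Type*} [Field K] [AddCommGroup E] [Module K E]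
    [FiniteDimensional K E] (p : Submodule K E) :
    finrank K p.dualAnnihilator + finrank K p = finrank K E := by
  rw [← LinearEquiv.finrank_eq (Subspace.quotEquivAnnihilator p)]
  exact Submodule.finrank_quotient_add_finrank p

lemma lag_dim_ge [FiniteDimensional k V] (halt : ∀ v : V, B v v = 0)
    {M W : Submodule k V}
    (hMW : M ≤ W) (hiso : M ≤ orthogonalCompl B M)
    (hmax : W ⊓ orthogonalCompl B M ≤ M) :
    finrank k W + finrank k (W ⊓ orthogonalCompl B W : Submodule k V) ≤ 2 * finrank k M := by
  set R : Submodule k V := W ⊓ orthogonalCompl B W with hRdef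
  have hRM : R ≤ M := fun x hx => hmax ⟨hx.1, orthogonalCompl_antitone hMW hx.2⟩
  let f : ↥W →ₗ[k] Module.Dual k ↥M := (B.compl₂ M.subtype).domRestrict W
  have hker : LinearMap.ker f = Submodule.comap W.subtype M := by
    ext ⟨w, hw⟩
    simp only [LinearMap.mem_ker, Submodule.mem_comap, Submodule.coe_subtype]
    constructor
    · intro h
      refine hmax ⟨hw, fun m hm => ?_⟩
      have := LinearMap.congr_fun h ⟨m, hm⟩
      simpa [f] using this
    · intro hwM
      ext m
      simpa [f] using hiso hwM m.1 m.2
  have hrange : LinearMap.range f ≤ (Submodule.comap M.subtype R).dualAnnihilator := by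
    rintro _ ⟨w, rfl⟩
    rw [Submodule.mem_dualAnnihilator]
    intro r hr
    show B w.1 r.1 = 0
    rw [skewB halt]
    exact neg_eq_zero.mpr (hr.2 w.1 w.2)
  have e1 := LinearMap.finrank_range_add_finrank_ker f
  have e2 : finrank k (LinearMap.ker f) = finrank k M := by
    rw [hker]; exact LinearEquiv.finrank_eq (Submodule.comapSubtypeEquivOfLe hMW)
  have e3 : finrank k (LinearMap.range f)
      ≤ finrank k ((Submodule.comap M.subtype R).dualAnnihilator) :=
    Submodule.finrank_mono hrange
  have e4 := finrank_dualAnnihilator_add (Submodule.comap M.subtype R)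
  have e5 : finrank k (Submodule.comap M.subtype R) = finrank k R :=
    LinearEquiv.finrank_eq (Submodule.comapSubtypeEquivOfLe hRM)
  omega

lemma iso_dim_le [FiniteDimensional k V] (halt : ∀ v : V, B v v = 0)
    {P U : Submodule k V} (hPU : P ≤ U) (hiso : P ≤ orthogonalCompl B P) :
    2 * finrank k P ≤ finrank k U + finrank k (U ⊓ orthogonalCompl B U : Submodule k V) := by
  set R : Submodule k V := U ⊓ orthogonalCompl B U with hRdef
  let θ : ↥P →ₗ[k] Module.Dual k ↥U := (B.compl₂ U.subtype).domRestrict P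
  have hker : LinearMap.ker θ ≤ Submodule.comap P.subtype (P ⊓ R) := by
    rintro ⟨p, hp⟩ h
    have h' : ∀ u ∈ U, B p u = 0 := by
      intro u hu
      have := LinearMap.congr_fun h ⟨u, hu⟩
      simpa [θ] using this
    exact ⟨hp, hPU hp, h'⟩
  have hrange : LinearMap.range θ ≤ (Submodule.comap U.subtype (P ⊔ R)).dualAnnihilator := by
    rintro _ ⟨p, rfl⟩
    rw [Submodule.mem_dualAnnihilator]
    intro u hu
    obtain ⟨x, hx, y, hy, hxy⟩ := Submodule.mem_sup.mp hu
    show B p.1 u.1 = 0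
    have h1 : B p.1 x = 0 := hiso p.2 x hx
    have h2 : B p.1 y = 0 := by rw [skewB halt, hy.2 p.1 (hPU p.2), neg_zero]
    rw [show (u : V) = x + y from hxy.symm, map_add, h1, h2, add_zero]
  have e1 := LinearMap.finrank_range_add_finrank_ker θ
  have e2 : finrank k (LinearMap.ker θ) ≤ finrank k (P ⊓ R : Submodule k V) := by
    refine le_trans (Submodule.finrank_mono hker) ?_
    exact le_of_eq (LinearEquiv.finrank_eq (Submodule.comapSubtypeEquivOfLe inf_le_left))
  have e3 : finrank k (LinearMap.range θ)
      ≤ finrank k ((Submodule.comap U.subtype (P ⊔ R)).dualAnnihilator) :=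
    Submodule.finrank_mono hrange
  have e4 := finrank_dualAnnihilator_add (Submodule.comap U.subtype (P ⊔ R))
  have e5 : finrank k (Submodule.comap U.subtype (P ⊔ R)) = finrank k (P ⊔ R : Submodule k V) :=
    LinearEquiv.finrank_eq (Submodule.comapSubtypeEquivOfLe (sup_le hPU inf_le_left))
  have e6 := Submodule.finrank_sup_add_finrank_inf_eq P R
  have e7 : finrank k (P ⊓ R : Submodule k V) ≤ finrank k R :=
    Submodule.finrank_mono inf_le_right
  omega

lemma step_span {W W' : Submodule k V} (hle : W ≤ W')
    (hrank : Module.rank k (↥W' ⧸ Submodule.comap W'.subtype W) ≤ 1)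
    {v : V} (hv : v ∈ W') (hvW : v ∉ W) : W ⊔ Submodule.span k {v} = W' := by
  refine le_antisymm (sup_le hle (by rwa [Submodule.span_singleton_le_iff_mem])) ?_
  intro u hu
  obtain ⟨v₀, hv₀⟩ := rank_le_one_iff.mp hrank
  set π := (Submodule.comap W'.subtype W).mkQ with hπdef
  obtain ⟨c, hc⟩ := hv₀ (π ⟨v, hv⟩)
  obtain ⟨c', hc'⟩ := hv₀ (π ⟨u, hu⟩)
  have hc0 : c ≠ 0 := by
    rintro rfl
    rw [zero_smul] at hc
    exact hvW (by simpa using (Submodule.Quotient.mk_eq_zero _).mp hc.symm)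
  have hz : π ((⟨u, hu⟩ : ↥W') - (c' * c⁻¹) • ⟨v, hv⟩) = 0 := by
    rw [map_sub, map_smul, ← hc, ← hc', smul_smul]
    rw [mul_assoc, inv_mul_cancel₀ hc0, mul_one, sub_self]
  have hw : u - (c' * c⁻¹) • v ∈ W := by
    simpa using (Submodule.Quotient.mk_eq_zero _).mp hz
  have : u = (u - (c' * c⁻¹) • v) + (c' * c⁻¹) • v := by abel
  rw [this]
  exact Submodule.add_mem _ (Submodule.mem_sup_left hw)
    (Submodule.mem_sup_right (Submodule.smul_mem _ _ (Submodule.mem_span_singleton_self v)))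

lemma finrank_sup_span [FiniteDimensional k V] {M : Submodule k V} {v : V} (hv : v ∉ M) :
    finrank k (M ⊔ Submodule.span k {v} : Submodule k V) = finrank k M + 1 := by
  have hv0 : v ≠ 0 := fun h => hv (h ▸ M.zero_mem)
  have h1 := Submodule.finrank_sup_add_finrank_inf_eq M (Submodule.span k {v})
  have h2 : M ⊓ Submodule.span k {v} = ⊥ := by
    rw [eq_bot_iff]
    rintro x ⟨hxM, hxs⟩
    obtain ⟨c, hc⟩ := Submodule.mem_span_singleton.mp hxs
    rcases eq_or_ne c 0 with rfl | hcne
    · simp [← hc]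
    · refine absurd ?_ hv
      have hm := M.smul_mem c⁻¹ hxM
      rw [← hc, smul_smul, inv_mul_cancel₀ hcne, one_smul] at hm
      exact hm
  rw [h2, finrank_bot, finrank_span_singleton hv0] at h1
  omega



lemma isLagrangianIn_def {k V : Type*} [Field k] [AddCommGroup V] [Module k V]
    {B : V →ₗ[k] V →ₗ[k] k} {U M : Submodule k V}
    (h1 : M ≤ U) (h2 : M ≤ orthogonalCompl B M) (h3 : U ⊓ orthogonalCompl B M ≤ M) :
    M ≤ U ∧ M ≤ orthogonalCompl B M ∧
      ∀ L' : Submodule k V, L' ≤ U → L' ≤ orthogonalCompl B L' → M ≤ L' → L' = M :=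
  ⟨h1, h2, fun _L' hU hiso hML' =>
    le_antisymm (fun x hx => h3 ⟨hU hx, orthogonalCompl_antitone hML' (hiso hx)⟩) hML'⟩

lemma isotropic_sup {k V : Type*} [Field k] [AddCommGroup V] [Module k V]
    {B : V →ₗ[k] V →ₗ[k] k} (halt : ∀ v : V, B v v = 0) {U M : Submodule k V}
    (hMU : M ≤ U) (hiso : M ≤ orthogonalCompl B M) :
    M ⊔ (U ⊓ orthogonalCompl B U) ≤ orthogonalCompl B (M ⊔ (U ⊓ orthogonalCompl B U)) := by
  intro x hx
  obtain ⟨m, hm, a, ha, rfl⟩ := Submodule.mem_sup.mp hx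
  intro w hw
  obtain ⟨m', hm', a', ha', rfl⟩ := Submodule.mem_sup.mp hw
  have e1 : B m m' = 0 := hiso hm m' hm'
  have e2 : B m a' = 0 := by rw [skewB halt, ha'.2 m (hMU hm), neg_zero]
  have e3 : B a m' = 0 := ha.2 m' (hMU hm')
  have e4 : B a a' = 0 := ha.2 a' ha'.1
  simp [map_add, LinearMap.add_apply, e1, e2, e3, e4]

end helperlemmas

/-- Vergne's theorem, linear algebra part: given an alternating bilinear form `B` on a
finite-dimensional space `V` and a filtration `0 = V_0 ⊆ V_1 ⊆ ⋯ ⊆ V_n = V` with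
one-dimensional (or zero) steps, there is exactly one subspace `L` such that `L ∩ V_i`
is Lagrangian in `V_i` for every `i`, namely `L = Σ_i Ker (B|_{V_i})`; in particular
this `L` is Lagrangian in `V`. -/
theorem vergne_unique_compatible_lagrangian
    {k V : Type*} [Field k] [AddCommGroup V] [Module k V] [FiniteDimensional k V]
    (B : V →ₗ[k] V →ₗ[k] k) (halt : ∀ v : V, B v v = 0)
    (n : ℕ) (W : ℕ → Submodule k V)
    (h0 : W 0 = ⊥) (hn : W n = ⊤)
    (hmono : ∀ i < n, W i ≤ W (i + 1))
    (hstep : ∀ i < n,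
      Module.rank k (↥(W (i + 1)) ⧸ Submodule.comap (W (i + 1)).subtype (W i)) ≤ 1) :
    (∀ i ≤ n, IsLagrangianIn B (W i)
      ((⨆ j ∈ Finset.Icc 1 n, (W j ⊓ orthogonalCompl B (W j))) ⊓ W i)) ∧
    (∀ L : Submodule k V, (∀ i ≤ n, IsLagrangianIn B (W i) (L ⊓ W i)) →
      L = ⨆ j ∈ Finset.Icc 1 n, (W j ⊓ orthogonalCompl B (W j))) ∧
    IsLagrangianIn B ⊤ (⨆ j ∈ Finset.Icc 1 n, (W j ⊓ orthogonalCompl B (W j))) := by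
  let A : ℕ → Submodule k V := fun i => ⨆ j ∈ Finset.Icc 1 i, (W j ⊓ orthogonalCompl B (W j))
  have hAn : (⨆ j ∈ Finset.Icc 1 n, (W j ⊓ orthogonalCompl B (W j))) = A n := rfl
  rw [hAn]
  have hAsucc : ∀ i : ℕ,
      A (i + 1) = A i ⊔ (W (i + 1) ⊓ orthogonalCompl B (W (i + 1))) := by
    intro i
    have hins : Finset.Icc 1 (i + 1) = insert (i + 1) (Finset.Icc 1 i) :=
      (Finset.insert_Icc_right_eq_Icc_add_one (by omega)).symm
    show (⨆ j ∈ Finset.Icc 1 (i + 1), (W j ⊓ orthogonalCompl B (W j))) = _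
    rw [hins, Finset.iSup_insert]
    exact sup_comm _ _
  have hAmono : ∀ i j : ℕ, i ≤ j → A i ≤ A j := by
    intro i j hij
    refine iSup₂_le fun x hx => ?_
    rw [Finset.mem_Icc] at hx
    exact le_iSup₂_of_le x (Finset.mem_Icc.mpr ⟨hx.1, hx.2.trans hij⟩) le_rfl
  -- main induction
  have key : ∀ i, i ≤ n →
      A i ≤ W i ∧ A i ≤ orthogonalCompl B (A i) ∧ W i ⊓ orthogonalCompl B (A i) ≤ A i := by
    intro i
    induction i with
    | zero =>
      intro _
      have hA0 : A 0 = ⊥ := by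
        show (⨆ j ∈ Finset.Icc 1 0, (W j ⊓ orthogonalCompl B (W j))) = ⊥
        simp [show Finset.Icc 1 0 = (∅ : Finset ℕ) from rfl]
      rw [hA0, h0]
      exact ⟨le_rfl, bot_le, inf_le_left⟩
    | succ i ih =>
      intro hin
      have hi : i < n := hin
      obtain ⟨ih1, ih2, ih3⟩ := ih (le_of_lt hi)
      have hWle : W i ≤ W (i + 1) := hmono i hi
      rw [hAsucc i]
      set M : Submodule k V := A i with hM
      set K2 : Submodule k V := W (i + 1) ⊓ orthogonalCompl B (W (i + 1)) with hK2
      have h1 : M ⊔ K2 ≤ W (i + 1) := sup_le (ih1.trans hWle) inf_le_left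
      have h2 : M ⊔ K2 ≤ orthogonalCompl B (M ⊔ K2) :=
        isotropic_sup halt (ih1.trans hWle) ih2
      refine ⟨h1, h2, ?_⟩
      by_cases hcase : K2 ≤ W i
      · -- Case II : rad W' ⊆ W, reduce to M and use dimension contradiction
        have hsub : W (i + 1) ⊓ orthogonalCompl B (M ⊔ K2)
            ≤ W (i + 1) ⊓ orthogonalCompl B M :=
          inf_le_inf_left _ (orthogonalCompl_antitone le_sup_left)
        refine le_trans hsub (le_trans ?_ le_sup_left)
        intro v hv
        by_cases hvW1 : v ∈ W i
        · exact ih3 ⟨hvW1, hv.2⟩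
        · exfalso
          have hspan : W i ⊔ Submodule.span k {v} = W (i + 1) :=
            step_span hWle (hstep i hi) hv.1 hvW1
          have hvM : v ∉ M := fun h => hvW1 (ih1 h)
          have hPU : M ⊔ Submodule.span k {v} ≤ W (i + 1) := by
            rw [← hspan]
            exact sup_le (ih1.trans le_sup_left) le_sup_right
          have hPiso : M ⊔ Submodule.span k {v}
              ≤ orthogonalCompl B (M ⊔ Submodule.span k {v}) := by
            intro x hx
            obtain ⟨m, hm, s, hs, rfl⟩ := Submodule.mem_sup.mp hx
            obtain ⟨c, hc⟩ := Submodule.mem_span_singleton.mp hs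
            intro w hw
            obtain ⟨m', hm', s', hs', rfl⟩ := Submodule.mem_sup.mp hw
            obtain ⟨c', hc'⟩ := Submodule.mem_span_singleton.mp hs'
            have e1 : B m m' = 0 := ih2 hm m' hm'
            have e2 : B m s' = 0 := by
              rw [← hc', map_smul, skewB halt, hv.2 m hm, neg_zero, smul_zero]
            have e3 : B s m' = 0 := by
              rw [← hc, map_smul, LinearMap.smul_apply, hv.2 m' hm', smul_zero]
            have e4 : B s s' = 0 := by
              rw [← hc, ← hc', map_smul, map_smul, LinearMap.smul_apply, halt,
                smul_zero, smul_zero]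
            simp [map_add, LinearMap.add_apply, e1, e2, e3, e4]
          have hD := lag_dim_ge halt ih1 ih2 ih3
          have hE := iso_dim_le halt hPU hPiso
          rw [← hK2] at hE
          have hrank1 : finrank k (M ⊔ Submodule.span k {v} : Submodule k V)
              = finrank k M + 1 := finrank_sup_span hvM
          have hrank2 : finrank k (W (i + 1)) = finrank k (W i) + 1 := by
            rw [← hspan]; exact finrank_sup_span hvW1
          have hradle : finrank k K2
              ≤ finrank k (W i ⊓ orthogonalCompl B (W i) : Submodule k V) := by
            refine Submodule.finrank_mono (le_inf hcase ?_)
            exact le_trans inf_le_right (orthogonalCompl_antitone hWle)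
          omega
      · -- Case I : ∃ z ∈ K2 \ W i
        obtain ⟨z, hzK, hzW1⟩ := SetLike.not_le_iff_exists.mp hcase
        have hspan : W i ⊔ Submodule.span k {z} = W (i + 1) :=
          step_span hWle (hstep i hi) hzK.1 hzW1
        intro v hv
        have hvW2 : v ∈ W i ⊔ Submodule.span k {z} := by rw [hspan]; exact hv.1
        obtain ⟨u, hu, s, hs, rfl⟩ := Submodule.mem_sup.mp hvW2
        obtain ⟨c, hc⟩ := Submodule.mem_span_singleton.mp hs
        have huM : u ∈ M := by
          refine ih3 ⟨hu, fun m hm => ?_⟩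
          have hv' : B (u + s) m = 0 := hv.2 m (Submodule.mem_sup_left hm)
          have hz' : B s m = 0 := by
            rw [← hc, map_smul, LinearMap.smul_apply, hzK.2 m (hWle (ih1 hm)), smul_zero]
          rw [map_add, LinearMap.add_apply, hz', add_zero] at hv'
          exact hv'
        refine Submodule.add_mem _ (Submodule.mem_sup_left huM) (Submodule.mem_sup_right ?_)
        rw [← hc]
        exact K2.smul_mem c hzK
    -- end induction
  obtain ⟨g1, g2, g3⟩ := key n le_rfl
  have hLagTop : IsLagrangianIn B ⊤ (A n) := by
    refine isLagrangianIn_def (le_top) g2 ?_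
    rw [← hn]
    exact g3
  refine ⟨?_, ?_, hLagTop⟩
  · intro i hin
    obtain ⟨h1, h2, h3⟩ := key i hin
    have heq : A n ⊓ W i = A i := by
      refine (isLagrangianIn_def h1 h2 h3).2.2 (A n ⊓ W i) inf_le_right
        (fun x hx => orthogonalCompl_antitone inf_le_left (g2 hx.1)) ?_
      exact le_inf (hAmono i n hin) h1
    rw [heq]
    exact isLagrangianIn_def h1 h2 h3
  · intro L hL
    have hKL : ∀ j, j ∈ Finset.Icc 1 n → (W j ⊓ orthogonalCompl B (W j)) ≤ L := by
      intro j hj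
      rw [Finset.mem_Icc] at hj
      obtain ⟨c1, c2, c3⟩ := hL j hj.2
      have hiso := isotropic_sup halt (inf_le_right : L ⊓ W j ≤ W j) c2
      have heq := c3 ((L ⊓ W j) ⊔ (W j ⊓ orthogonalCompl B (W j)))
        (sup_le inf_le_right inf_le_left) hiso le_sup_left
      intro x hx
      have hx' : x ∈ L ⊓ W j := heq ▸ Submodule.mem_sup_right hx
      exact hx'.1
    have hAL : A n ≤ L := iSup₂_le hKL
    obtain ⟨d1, d2, d3⟩ := hL n le_rfl
    rw [hn, inf_top_eq] at d2
    exact (hLagTop.2.2 L le_top d2 hAL)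
end

section
/- Let V be a finite-dimensional Lie algebra over a field k, let 0 = V_0 ⊆ V_1 ⊆ ⋯ ⊆ V_n = V be an increasing chain of Lie ideals of V with dim_k(V_i/V_{i−1}) ≤ 1 for all 1 ≤ i ≤ n, and let B : V × V → k be an alternating bilinear form which is a 2-cocycle, i.e. B(⁅x, y⁆, z) + B(⁅y, z⁆, x) + B(⁅z, x⁆, y) = 0 for all x, y, z ∈ V. For each i set K_i := {v ∈ V_i : B(v, w) = 0 for all w ∈ V_i}. Then the subspace L := K_1 + K_2 + ⋯ + K_n is a Lie subalgebra of V. -/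
theorem monotoneOn_nat_Iic_of_le_succ {α : Type*} [Preorder α] {f : ℕ → α} {n : ℕ}
    (hf : ∀ i < n, f i ≤ f (i + 1)) : MonotoneOn f (Set.Iic n) := by
  intro i _ j hj hij
  induction j, hij using Nat.le_induction with
  | base => exact le_rfl
  | succ j _ ih => exact (ih (Nat.le_of_succ_le hj)).trans (hf j hj)

theorem LieAlgebra.lie_mem_of_mem_biSup {k V ι : Type*} [CommRing k] [LieRing V]
    [LieAlgebra k V] {p : ι → Prop} {M : ι → Submodule k V} {N : Submodule k V}
    (h : ∀ i, p i → ∀ j, p j → ∀ a ∈ M i, ∀ b ∈ M j, ⁅a, b⁆ ∈ N) {x y : V}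
    (hx : x ∈ ⨆ i, ⨆ _ : p i, M i) (hy : y ∈ ⨆ i, ⨆ _ : p i, M i) : ⁅x, y⁆ ∈ N := by
  have hxy := Submodule.apply_mem_map₂ (LieModule.toEnd k V V : V →ₗ[k] Module.End k V) hx hy
  refine (?_ : _ ≤ N) hxy
  simp only [Submodule.map₂_iSup_left, Submodule.map₂_iSup_right, iSup_le_iff, Submodule.map₂_le]
  exact fun i hi j hj a ha b hb => h j hj i hi a ha b hb

theorem lie_mem_inf_orthogonalCompl {k V : Type*} [Field k] [LieRing V] [LieAlgebra k V]
    {B : V →ₗ[k] V →ₗ[k] k} (hB : B.IsAlt)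
    (hcocycle : ∀ x y z : V, B ⁅x, y⁆ z + B ⁅y, z⁆ x + B ⁅z, x⁆ y = 0)
    {J J' : LieIdeal k V} (hJ : J ≤ J') {a b : V}
    (ha : a ∈ (J : Submodule k V) ⊓ orthogonalCompl B J) (hb : b ∈ orthogonalCompl B J') :
    ⁅a, b⁆ ∈ (J : Submodule k V) ⊓ orthogonalCompl B J := by
  obtain ⟨haJ, haperp⟩ := ha
  refine ⟨lie_mem_left k V J a b haJ, fun w hw => ?_⟩
  have hbwa : B ⁅b, w⁆ a = 0 := hB.eq_iff.mp (haperp _ (lie_mem_right k V J b w hw))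
  have hwab : B ⁅w, a⁆ b = 0 := hB.eq_iff.mp (hb _ (hJ (lie_mem_right k V J w a haJ)))
  linear_combination hcocycle a b w - hbwa - hwab

theorem vergne_cocycle_lie_subalgebra_general
    {k V : Type*} [Field k] [LieRing V] [LieAlgebra k V]
    (n : ℕ) (I : ℕ → LieIdeal k V)
    (hmono : ∀ i < n, I i ≤ I (i + 1))
    (B : V →ₗ[k] V →ₗ[k] k) (halt : ∀ v : V, B v v = 0)
    (hcocycle : ∀ x y z : V, B ⁅x, y⁆ z + B ⁅y, z⁆ x + B ⁅z, x⁆ y = 0) :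
    ∀ x y : V,
      x ∈ (⨆ i ∈ Finset.Icc 1 n,
        ((I i : Submodule k V) ⊓ orthogonalCompl B (I i : Submodule k V))) →
      y ∈ (⨆ i ∈ Finset.Icc 1 n,
        ((I i : Submodule k V) ⊓ orthogonalCompl B (I i : Submodule k V))) →
      ⁅x, y⁆ ∈ (⨆ i ∈ Finset.Icc 1 n,
        ((I i : Submodule k V) ⊓ orthogonalCompl B (I i : Submodule k V))) := by
  intro x y hx hy
  have hI := monotoneOn_nat_Iic_of_le_succ hmono
  refine LieAlgebra.lie_mem_of_mem_biSup (fun i hi j hj a ha b hb => ?_) hx hy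
  have hin := (Finset.mem_Icc.mp hi).2
  have hjn := (Finset.mem_Icc.mp hj).2
  rcases le_total i j with hij | hji
  · exact Submodule.mem_iSup_of_mem i <| Submodule.mem_iSup_of_mem hi <|
      lie_mem_inf_orthogonalCompl halt hcocycle (hI hin hjn hij) ha hb.2
  · rw [← lie_skew]
    exact neg_mem <| Submodule.mem_iSup_of_mem j <| Submodule.mem_iSup_of_mem hj <|
      lie_mem_inf_orthogonalCompl halt hcocycle (hI hjn hin hji) hb ha.2

/-- Vergne's theorem for `2`-cocycles: if `V` is a finite-dimensional Lie algebra with a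
chain of Lie ideals `0 = V_0 ⊆ V_1 ⊆ ⋯ ⊆ V_n = V` whose successive quotients have
dimension at most `1`, and `B` is an alternating `2`-cocycle on `V`, then
`L = Σ_i Ker (B|_{V_i})` is a Lie subalgebra of `V`. -/
theorem vergne_cocycle_lie_subalgebra
    {k V : Type*} [Field k] [LieRing V] [LieAlgebra k V] [FiniteDimensional k V]
    (n : ℕ) (I : ℕ → LieIdeal k V)
    (h0 : I 0 = ⊥) (hn : I n = ⊤)
    (hmono : ∀ i < n, I i ≤ I (i + 1))
    (hstep : ∀ i < n,
      Module.rank k (↥(I (i + 1) : Submodule k V) ⧸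
        Submodule.comap (I (i + 1) : Submodule k V).subtype (I i : Submodule k V)) ≤ 1)
    (B : V →ₗ[k] V →ₗ[k] k) (halt : ∀ v : V, B v v = 0)
    (hcocycle : ∀ x y z : V, B ⁅x, y⁆ z + B ⁅y, z⁆ x + B ⁅z, x⁆ y = 0) :
    ∀ x y : V,
      x ∈ (⨆ i ∈ Finset.Icc 1 n,
        ((I i : Submodule k V) ⊓ orthogonalCompl B (I i : Submodule k V))) →
      y ∈ (⨆ i ∈ Finset.Icc 1 n,
        ((I i : Submodule k V) ⊓ orthogonalCompl B (I i : Submodule k V))) →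
      ⁅x, y⁆ ∈ (⨆ i ∈ Finset.Icc 1 n,
        ((I i : Submodule k V) ⊓ orthogonalCompl B (I i : Submodule k V))) :=
  vergne_cocycle_lie_subalgebra_general n I hmono B halt hcocycle
end
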